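/- arXiv:2412.19965 — 5 statements merged into one kernel-verified Lean document; each statement's English description precedes it below -/
import Mathlib

section
/- Let α₀ satisfy 1/2 < α₀ < 1. There exists a positive constant C depending only on α₀ such that for all α, β in [α₀, 1] and all t > 0, ∫₀ᵗ ((t−s)^{α−1} − (t−s)^{β−1})² ds ≤ C · (t^{2α−1} + t^{2β−1}) · ((ln t)² + 1) · (α − β)². -/
/-!
After the substitution `u = t - s` the integral is elementary: with `f p = t ^ p / p`, `p = 2α - 1`
and `q = 2β - 1` it equals the midpoint second difference `f p + f q - 2 f ((p + q) / 2)`. A second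
difference is bounded by `sup |f''| · (p - q)² / 2`, and
`f'' p = t ^ p (log² t / p - 2 log t / p² + 2 / p³)` is bounded on `[2α₀ - 1, 1]` by a constant
times `(t ^ p + t ^ q) (log² t + 1)`, since `t ^ r` is monotone in `r`.
-/

open Real Set intervalIntegral
open scoped Interval

theorem abs_sub_sub_deriv_mul_le {f f' f'' : ℝ → ℝ} {M x y : ℝ}
    (hf : ∀ p ∈ [[x, y]], HasDerivAt f (f' p) p) (hf' : ∀ p ∈ [[x, y]], HasDerivAt f' (f'' p) p)
    (hM : ∀ p ∈ [[x, y]], |f'' p| ≤ M) :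
    |f y - f x - f' x * (y - x)| ≤ M * (y - x) ^ 2 := by
  have hx : x ∈ [[x, y]] := left_mem_uIcc
  have hy : y ∈ [[x, y]] := right_mem_uIcc
  have hf'_lip : ∀ p ∈ [[x, y]], ‖f' p - f' x‖ ≤ M * |y - x| := fun p hp =>
    calc ‖f' p - f' x‖ ≤ M * ‖p - x‖ :=
          (convex_uIcc x y).norm_image_sub_le_of_norm_hasDerivWithin_le
            (fun q hq => (hf' q hq).hasDerivWithinAt) hM hx hp
      _ ≤ M * |y - x| :=
          mul_le_mul_of_nonneg_left (abs_sub_left_of_mem_uIcc hp) ((abs_nonneg _).trans (hM x hx))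
  have hg : ∀ p ∈ [[x, y]],
      HasDerivWithinAt (fun q => f q - f' x * q) (f' p - f' x) [[x, y]] p := fun p hp => by
    simpa using ((hf p hp).fun_sub ((hasDerivAt_id' p).const_mul (f' x))).hasDerivWithinAt
  have hg_lip := (convex_uIcc x y).norm_image_sub_le_of_norm_hasDerivWithin_le hg hf'_lip hx hy
  rw [Real.norm_eq_abs, Real.norm_eq_abs] at hg_lip
  calc |f y - f x - f' x * (y - x)| = |f y - f' x * y - (f x - f' x * x)| := by ring_nf
    _ ≤ M * |y - x| * |y - x| := hg_lip
    _ = M * (y - x) ^ 2 := by rw [mul_assoc, ← sq, sq_abs]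

theorem add_sub_two_mul_midpoint_le {f f' f'' : ℝ → ℝ} {M a b : ℝ}
    (hf : ∀ p ∈ [[a, b]], HasDerivAt f (f' p) p) (hf' : ∀ p ∈ [[a, b]], HasDerivAt f' (f'' p) p)
    (hM : ∀ p ∈ [[a, b]], |f'' p| ≤ M) :
    f a + f b - 2 * f ((a + b) / 2) ≤ M * (a - b) ^ 2 / 2 := by
  have hm : (a + b) / 2 ∈ [[a, b]] := by
    rcases le_total a b with h | h
    · exact mem_uIcc_of_le (by linarith) (by linarith)
    · exact mem_uIcc_of_ge (by linarith) (by linarith)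
  set m := (a + b) / 2
  have taylor : ∀ y ∈ [[a, b]], |f y - f m - f' m * (y - m)| ≤ M * (y - m) ^ 2 := fun y hy =>
    have hsub : [[m, y]] ⊆ [[a, b]] := uIcc_subset_uIcc hm hy
    abs_sub_sub_deriv_mul_le (fun p hp => hf p (hsub hp)) (fun p hp => hf' p (hsub hp))
      (fun p hp => hM p (hsub hp))
  have ha := (le_abs_self _).trans (taylor a left_mem_uIcc)
  have hb := (le_abs_self _).trans (taylor b right_mem_uIcc)
  calc f a + f b - 2 * f m
      = (f a - f m - f' m * (a - m)) + (f b - f m - f' m * (b - m)) := by ring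
    _ ≤ M * (a - m) ^ 2 + M * (b - m) ^ 2 := add_le_add ha hb
    _ = M * (a - b) ^ 2 / 2 := by ring

theorem rpow_le_add_rpow_of_mem_uIcc {t a b p : ℝ} (ht : 0 < t) (hp : p ∈ [[a, b]]) :
    t ^ p ≤ t ^ a + t ^ b := by
  have hmax : t ^ p ≤ max (t ^ a) (t ^ b) := by
    rcases le_total 1 t with h1 | h1
    · have hmono : Monotone (t ^ · : ℝ → ℝ) := fun _ _ h => rpow_le_rpow_of_exponent_le h1 h
      exact (hmono hp.2).trans_eq hmono.map_max
    · have hanti : Antitone (t ^ · : ℝ → ℝ) := fun _ _ h => rpow_le_rpow_of_exponent_ge ht h1 h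
      exact (hanti hp.1).trans_eq hanti.map_min
  exact hmax.trans (max_le_add_of_nonneg (by positivity) (by positivity))

theorem hasDerivAt_rpow_div_self {t p : ℝ} (ht : 0 < t) (hp : p ≠ 0) :
    HasDerivAt (fun q => t ^ q / q) (t ^ p * (log t * p⁻¹ - p⁻¹ ^ 2)) p := by
  refine ((hasStrictDerivAt_const_rpow ht p).hasDerivAt.div (hasDerivAt_id p) hp).congr_deriv ?_
  simp only [id]
  field_simp

theorem hasDerivAt_rpow_mul_log_mul_inv_sub_inv_sq {t p : ℝ} (ht : 0 < t) (hp : p ≠ 0) :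
    HasDerivAt (fun q => t ^ q * (log t * q⁻¹ - q⁻¹ ^ 2))
      (t ^ p * (log t ^ 2 * p⁻¹ - 2 * log t * p⁻¹ ^ 2 + 2 * p⁻¹ ^ 3)) p := by
  have h1 := (hasDerivAt_inv hp).const_mul (log t)
  have h2 := (hasDerivAt_inv hp).fun_pow 2
  refine ((hasStrictDerivAt_const_rpow ht p).hasDerivAt.mul (h1.sub h2)).congr_deriv ?_
  simp only [Pi.sub_apply, Nat.add_one_sub_one, pow_one]
  field_simp
  ring

theorem abs_sq_mul_sub_two_mul_mul_sq_add_two_mul_pow_three_le {L q q₀ : ℝ} (hq : 0 < q)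
    (hq₀ : q ≤ q₀) :
    |L ^ 2 * q - 2 * L * q ^ 2 + 2 * q ^ 3| ≤ (2 * q₀ + 3 * q₀ ^ 3) * (L ^ 2 + 1) := by
  have hnonneg : 0 ≤ L ^ 2 * q - 2 * L * q ^ 2 + 2 * q ^ 3 := by
    have : L ^ 2 * q - 2 * L * q ^ 2 + 2 * q ^ 3 = q * ((L - q) ^ 2 + q ^ 2) := by ring
    rw [this]; positivity
  rw [abs_of_nonneg hnonneg]
  calc L ^ 2 * q - 2 * L * q ^ 2 + 2 * q ^ 3 ≤ 2 * L ^ 2 * q + 3 * q ^ 3 := by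
        nlinarith [mul_nonneg hq.le (sq_nonneg (L + q))]
    _ ≤ (2 * q + 3 * q ^ 3) * (L ^ 2 + 1) := by nlinarith [pow_pos hq 3, sq_nonneg L]
    _ ≤ (2 * q₀ + 3 * q₀ ^ 3) * (L ^ 2 + 1) := by gcongr

theorem rpow_div_self_second_difference_le {t p₀ a b : ℝ} (ht : 0 < t) (hp₀ : 0 < p₀)
    (ha : p₀ ≤ a) (hb : p₀ ≤ b) :
    t ^ a / a + t ^ b / b - 2 * (t ^ ((a + b) / 2) / ((a + b) / 2))
      ≤ (t ^ a + t ^ b) * ((2 * p₀⁻¹ + 3 * p₀⁻¹ ^ 3) * (log t ^ 2 + 1)) * (a - b) ^ 2 / 2 := by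
  have hlow : ∀ p ∈ [[a, b]], p₀ ≤ p := fun p hp => (le_min ha hb).trans hp.1
  have hpos : ∀ p ∈ [[a, b]], 0 < p := fun p hp => hp₀.trans_le (hlow p hp)
  refine add_sub_two_mul_midpoint_le (f := fun q => t ^ q / q)
    (fun p hp => hasDerivAt_rpow_div_self ht (hpos p hp).ne')
    (fun p hp => hasDerivAt_rpow_mul_log_mul_inv_sub_inv_sq ht (hpos p hp).ne') fun p hp => ?_
  rw [abs_mul, abs_of_pos (rpow_pos_of_pos ht p)]
  exact mul_le_mul (rpow_le_add_rpow_of_mem_uIcc ht hp)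
    (abs_sq_mul_sub_two_mul_mul_sq_add_two_mul_pow_three_le (inv_pos.2 (hpos p hp))
      (inv_anti₀ hp₀ (hlow p hp)))
    (abs_nonneg _) (by positivity)

theorem integral_sub_rpow_sub_sub_rpow_sq {t a b : ℝ} (ht : 0 ≤ t) (ha : -1 < 2 * a)
    (hb : -1 < 2 * b) :
    ∫ s in 0..t, ((t - s) ^ a - (t - s) ^ b) ^ 2
      = t ^ (2 * a + 1) / (2 * a + 1) + t ^ (2 * b + 1) / (2 * b + 1)
        - 2 * (t ^ (a + b + 1) / (a + b + 1)) := by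
  have hab : -1 < a + b := by linarith
  have hexpand : ∀ u ∈ Ι 0 t,
      (u ^ a - u ^ b) ^ 2 = u ^ (2 * a) - 2 * u ^ (a + b) + u ^ (2 * b) := by
    intro u hu
    have hu0 : 0 < u := by rw [uIoc_of_le ht] at hu; exact hu.1
    rw [sub_sq, mul_assoc, ← rpow_add hu0, ← rpow_natCast, ← rpow_natCast, ← rpow_mul hu0.le,
      ← rpow_mul hu0.le]
    push_cast
    ring_nf
  have iA := intervalIntegrable_rpow' (a := 0) (b := t) (by linarith : -1 < 2 * a)
  have iB := intervalIntegrable_rpow' (a := 0) (b := t) hab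
  have iC := intervalIntegrable_rpow' (a := 0) (b := t) (by linarith : -1 < 2 * b)
  rw [integral_comp_sub_left (fun u => (u ^ a - u ^ b) ^ 2) t, sub_self, sub_zero,
    integral_congr_ae (MeasureTheory.ae_of_all _ hexpand),
    integral_add (iA.sub (iB.const_mul 2)) iC, integral_sub iA (iB.const_mul 2),
    integral_const_mul, integral_rpow (Or.inl (by linarith)), integral_rpow (Or.inl hab),
    integral_rpow (Or.inl (by linarith)), zero_rpow (by linarith), zero_rpow (by linarith),
    zero_rpow (by linarith)]
  ring_nf

theorem kernel_difference_square_integral_bound_general (α₀ : ℝ) (h₁ : 1 / 2 < α₀) :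
    ∃ C : ℝ, 0 < C ∧ ∀ α β : ℝ, α ∈ Set.Icc α₀ 1 → β ∈ Set.Icc α₀ 1 → ∀ t : ℝ, 0 < t →
      (∫ s in (0 : ℝ)..t, ((t - s) ^ (α - 1) - (t - s) ^ (β - 1)) ^ 2)
        ≤ C * (t ^ (2 * α - 1) + t ^ (2 * β - 1)) * ((Real.log t) ^ 2 + 1)
          * (α - β) ^ 2 := by
  set p₀ := 2 * α₀ - 1
  have hp₀ : 0 < p₀ := by linarith
  refine ⟨2 * (2 * p₀⁻¹ + 3 * p₀⁻¹ ^ 3), by positivity, ?_⟩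
  rintro α β ⟨hα, -⟩ ⟨hβ, -⟩ t ht
  calc (∫ s in (0 : ℝ)..t, ((t - s) ^ (α - 1) - (t - s) ^ (β - 1)) ^ 2)
      = t ^ (2 * α - 1) / (2 * α - 1) + t ^ (2 * β - 1) / (2 * β - 1)
          - 2 * (t ^ ((2 * α - 1 + (2 * β - 1)) / 2) / ((2 * α - 1 + (2 * β - 1)) / 2)) := by
        rw [integral_sub_rpow_sub_sub_rpow_sq ht.le (by linarith) (by linarith)]
        ring_nf
    _ ≤ (t ^ (2 * α - 1) + t ^ (2 * β - 1)) * ((2 * p₀⁻¹ + 3 * p₀⁻¹ ^ 3) * (log t ^ 2 + 1))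
          * (2 * α - 1 - (2 * β - 1)) ^ 2 / 2 :=
        rpow_div_self_second_difference_le ht hp₀ (by linarith) (by linarith)
    _ = 2 * (2 * p₀⁻¹ + 3 * p₀⁻¹ ^ 3) * (t ^ (2 * α - 1) + t ^ (2 * β - 1))
          * ((Real.log t) ^ 2 + 1) * (α - β) ^ 2 := by ring

/-- Let `1/2 < α₀ < 1`. There is a constant `C > 0` depending only on `α₀` such that for
all `α, β ∈ [α₀, 1]` and `t > 0`:
`∫₀ᵗ ((t−s)^(α−1) − (t−s)^(β−1))² ds ≤ C (t^(2α−1) + t^(2β−1)) ((ln t)² + 1) (α − β)²`. -/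
theorem kernel_difference_square_integral_bound (α₀ : ℝ) (h₁ : 1 / 2 < α₀) (h₂ : α₀ < 1) :
    ∃ C : ℝ, 0 < C ∧ ∀ α β : ℝ, α ∈ Set.Icc α₀ 1 → β ∈ Set.Icc α₀ 1 → ∀ t : ℝ, 0 < t →
      (∫ s in (0 : ℝ)..t, ((t - s) ^ (α - 1) - (t - s) ^ (β - 1)) ^ 2)
        ≤ C * (t ^ (2 * α - 1) + t ^ (2 * β - 1)) * ((Real.log t) ^ 2 + 1)
          * (α - β) ^ 2 :=
  kernel_difference_square_integral_bound_general α₀ h₁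
end

section
/- Let α₀ satisfy 1/2 < α₀ < 1. There exists a positive constant C depending only on α₀ such that for all α, β in [α₀, 1] and all t > 0, ∫₀ᵗ ((t−s)^{α−1} − (t−s)^{β−1})² · (ln(t−s))² ds ≤ C · (t^{2α−1} + t^{2β−1}) · ((ln t)⁴ + 1) · (α − β)². -/
open Real MeasureTheory intervalIntegral

lemma kdsl_exp_aux (x y : ℝ) (h : y ≤ x) :
    Real.exp x - Real.exp y ≤ (x - y) * (Real.exp x + Real.exp y) := by
  have h1 := Real.add_one_le_exp (y - x)
  have h2 : Real.exp (y - x) * Real.exp x = Real.exp y := by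
    rw [← Real.exp_add]; ring_nf
  nlinarith [Real.exp_pos x, Real.exp_pos y,
    mul_le_mul_of_nonneg_right h1 (Real.exp_pos x).le,
    mul_nonneg (sub_nonneg.2 h) (Real.exp_pos y).le]

lemma kdsl_abs_exp (x y : ℝ) :
    |Real.exp x - Real.exp y| ≤ |x - y| * (Real.exp x + Real.exp y) := by
  rcases le_total y x with h|h
  · rw [abs_of_nonneg (by linarith [Real.exp_le_exp.2 h] : (0:ℝ) ≤ Real.exp x - Real.exp y),
      abs_of_nonneg (by linarith : (0:ℝ) ≤ x - y)]
    exact kdsl_exp_aux x y h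
  · rw [abs_sub_comm, abs_sub_comm x y,
      abs_of_nonneg (by linarith [Real.exp_le_exp.2 h] : (0:ℝ) ≤ Real.exp y - Real.exp x),
      abs_of_nonneg (by linarith : (0:ℝ) ≤ y - x)]
    linarith [kdsl_exp_aux y x h]

lemma kdsl_four_pow (a b : ℝ) : (a + b) ^ 4 ≤ 8 * (a ^ 4 + b ^ 4) := by
  nlinarith [sq_nonneg (a - b), sq_nonneg (a + b), sq_nonneg (a^2 - b^2),
    sq_nonneg (a^2 + b^2), sq_nonneg (a*b), sq_nonneg a, sq_nonneg b]

lemma kdsl_log_pow4 (ε v : ℝ) (hε : 0 < ε) (hv0 : 0 < v) (hv1 : v ≤ 1) :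
    (Real.log v) ^ 4 ≤ v ^ (-(4 * ε)) / ε ^ 4 := by
  have hp := Real.rpow_pos_of_pos hv0 (-ε)
  have h1 : Real.log (v ^ (-ε)) ≤ v ^ (-ε) - 1 :=
    Real.log_le_sub_one_of_pos hp
  rw [Real.log_rpow hv0] at h1
  have h2 : Real.log v ≤ 0 := Real.log_nonpos hv0.le hv1
  have h3 : -Real.log v ≤ v ^ (-ε) / ε := by
    rw [le_div_iff₀ hε]; nlinarith
  have h4 : (Real.log v) ^ 4 = (-Real.log v) ^ 4 := by ring
  rw [h4]
  calc (-Real.log v) ^ 4 ≤ (v ^ (-ε) / ε) ^ 4 :=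
        pow_le_pow_left₀ (by linarith) h3 4
    _ = v ^ (-(4 * ε)) / ε ^ 4 := by
        rw [div_pow, ← Real.rpow_natCast (v ^ (-ε)) 4, ← Real.rpow_mul hv0.le]
        norm_num
        rw [show -(ε * 4) = -(4*ε) by ring]

lemma kdsl_rpow_int (c : ℝ) (hc : 0 < c) (t : ℝ) :
    IntervalIntegrable (fun u : ℝ => u ^ (c - 1)) volume 0 t :=
  intervalIntegrable_rpow' (by linarith)

lemma kdsl_rpow_val (c t : ℝ) (hc : 0 < c) :
    ∫ u in (0:ℝ)..t, u ^ (c - 1) = t ^ c / c := by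
  rw [integral_rpow (Or.inl (by linarith))]
  rw [show c - 1 + 1 = c by ring, Real.zero_rpow hc.ne']
  ring


set_option maxHeartbeats 1000000 in


/-- Let `1/2 < α₀ < 1`. There is a constant `C > 0` depending only on `α₀` such that for
all `α, β ∈ [α₀, 1]` and `t > 0`:
`∫₀ᵗ ((t−s)^(α−1) − (t−s)^(β−1))² (ln(t−s))² ds
  ≤ C (t^(2α−1) + t^(2β−1)) ((ln t)⁴ + 1) (α − β)²`. -/
theorem kernel_difference_square_log_integral_bound (α₀ : ℝ) (h₁ : 1 / 2 < α₀) (h₂ : α₀ < 1) :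
    ∃ C : ℝ, 0 < C ∧ ∀ α β : ℝ, α ∈ Set.Icc α₀ 1 → β ∈ Set.Icc α₀ 1 → ∀ t : ℝ, 0 < t →
      (∫ s in (0 : ℝ)..t,
          ((t - s) ^ (α - 1) - (t - s) ^ (β - 1)) ^ 2 * (Real.log (t - s)) ^ 2)
        ≤ C * (t ^ (2 * α - 1) + t ^ (2 * β - 1)) * ((Real.log t) ^ 4 + 1)
          * (α - β) ^ 2 := by
  obtain ⟨a0, ha0def⟩ : ∃ a0 : ℝ, a0 = 2*α₀ - 1 := ⟨_, rfl⟩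
  have ha : (0:ℝ) < a0 := by rw [ha0def]; linarith
  obtain ⟨ε, hεdef⟩ : ∃ e : ℝ, e = a0 / 8 := ⟨_, rfl⟩
  have hε : 0 < ε := by rw [hεdef]; linarith
  have hE : (0:ℝ) < ε ^ 4 := pow_pos hε 4
  refine ⟨16/a0 + 32/(ε^4 * a0),
    add_pos (div_pos (by norm_num) ha) (div_pos (by norm_num) (mul_pos hE ha)), ?_⟩
  intro α β hα hβ t ht
  obtain ⟨hα1, hα2⟩ := hα
  obtain ⟨hβ1, hβ2⟩ := hβ
  have h2α : a0 ≤ 2*α - 1 := by rw [ha0def]; linarith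
  have h2β : a0 ≤ 2*β - 1 := by rw [ha0def]; linarith
  have h2α' : a0/2 ≤ 2*α - 1 - 4*ε := by rw [hεdef]; linarith [h2α]
  have h2β' : a0/2 ≤ 2*β - 1 - 4*ε := by rw [hεdef]; linarith [h2β]
  have hp1 : (0:ℝ) < 2*α - 1 := by linarith
  have hp2 : (0:ℝ) < 2*β - 1 := by linarith
  have hp3 : (0:ℝ) < 2*α - 1 - 4*ε := by linarith
  have hp4 : (0:ℝ) < 2*β - 1 - 4*ε := by linarith
  -- step A : substitution
  have hrw := intervalIntegral.integral_comp_sub_left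
    (fun u : ℝ => (u ^ (α-1) - u ^ (β-1)) ^ 2 * (Real.log u) ^ 2) t (a := 0) (b := t)
  simp only [sub_self, sub_zero] at hrw
  rw [hrw]
  -- pointwise bound
  have hpt : ∀ u ∈ Set.Icc (0:ℝ) t,
      (u ^ (α-1) - u ^ (β-1)) ^ 2 * (Real.log u) ^ 2 ≤
      16*(α-β)^2*(Real.log t)^4 * (u ^ (2*α-1-1) + u ^ (2*β-1-1))
        + 16*(α-β)^2*(t^(4*ε)/ε^4) * (u ^ (2*α-1-4*ε-1) + u ^ (2*β-1-4*ε-1)) := by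
    rintro u ⟨hu0, hut⟩
    rcases eq_or_lt_of_le hu0 with h0|h0
    · rw [← h0]
      simp only [Real.log_zero]
      have e1 : ((0:ℝ) ^ (α-1) - (0:ℝ) ^ (β-1)) ^ 2 * (0:ℝ) ^ 2 = 0 := by ring
      rw [e1]
      have := Real.rpow_nonneg (le_refl (0:ℝ)) (2*α-1-1)
      have := Real.rpow_nonneg (le_refl (0:ℝ)) (2*β-1-1)
      have := Real.rpow_nonneg (le_refl (0:ℝ)) (2*α-1-4*ε-1)
      have := Real.rpow_nonneg (le_refl (0:ℝ)) (2*β-1-4*ε-1)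
      have h4 : (0:ℝ) ≤ t^(4*ε)/ε^4 := by positivity
      positivity
    · -- u > 0
      have hA : (0:ℝ) < u ^ (α-1) := Real.rpow_pos_of_pos h0 _
      have hB : (0:ℝ) < u ^ (β-1) := Real.rpow_pos_of_pos h0 _
      have h1 : |u ^ (α-1) - u ^ (β-1)| ≤
          |α-β| * |Real.log u| * (u ^ (α-1) + u ^ (β-1)) := by
        rw [Real.rpow_def_of_pos h0, Real.rpow_def_of_pos h0]
        calc |Real.exp (Real.log u * (α-1)) - Real.exp (Real.log u * (β-1))|
            ≤ |Real.log u * (α-1) - Real.log u * (β-1)|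
              * (Real.exp (Real.log u * (α-1)) + Real.exp (Real.log u * (β-1))) :=
              kdsl_abs_exp _ _
          _ = |α-β| * |Real.log u|
              * (Real.exp (Real.log u * (α-1)) + Real.exp (Real.log u * (β-1))) := by
              rw [show Real.log u * (α-1) - Real.log u * (β-1) = Real.log u * (α-β) by ring,
                abs_mul]
              ring
      have e1 : (u ^ (α-1) - u ^ (β-1)) ^ 2 ≤
          (α-β)^2 * (Real.log u)^2 * (u ^ (α-1) + u ^ (β-1))^2 := by
        have h2' := pow_le_pow_left₀ (abs_nonneg _) h1 2
        rwa [sq_abs, mul_pow, mul_pow, sq_abs, sq_abs] at h2'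
      have hSA : u ^ (α-1) * u ^ (α-1) = u ^ (2*α-1-1) := by
        rw [← Real.rpow_add h0]; congr 1; ring
      have hSB : u ^ (β-1) * u ^ (β-1) = u ^ (2*β-1-1) := by
        rw [← Real.rpow_add h0]; congr 1; ring
      have e2 : (u ^ (α-1) + u ^ (β-1))^2 ≤ 2*(u ^ (2*α-1-1) + u ^ (2*β-1-1)) := by
        nlinarith [sq_nonneg (u ^ (α-1) - u ^ (β-1)), hSA, hSB]
      have e3 : (Real.log u)^4 ≤ 8*(Real.log t)^4 + 8*(t^(4*ε)/ε^4) * u^(-(4*ε)) := by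
        have hv0 : 0 < u/t := div_pos h0 ht
        have hv1 : u/t ≤ 1 := (div_le_one ht).2 hut
        have hlog := kdsl_log_pow4 ε (u/t) hε hv0 hv1
        have hdiv : (u/t)^(-(4*ε)) = t^(4*ε) * u^(-(4*ε)) := by
          rw [Real.div_rpow h0.le ht.le, Real.rpow_neg ht.le (4*ε), div_eq_mul_inv, inv_inv]; ring
        have hsplit : Real.log u = Real.log t + Real.log (u/t) := by
          rw [Real.log_div h0.ne' ht.ne']; ring
        calc (Real.log u)^4 = (Real.log t + Real.log (u/t))^4 := by rw [← hsplit]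
          _ ≤ 8*((Real.log t)^4 + (Real.log (u/t))^4) := kdsl_four_pow _ _
          _ ≤ 8*((Real.log t)^4 + (u/t)^(-(4*ε))/ε^4) := by linarith
          _ = 8*(Real.log t)^4 + 8*(t^(4*ε)/ε^4) * u^(-(4*ε)) := by rw [hdiv]; ring
      have hUSA : u^(-(4*ε)) * u ^ (2*α-1-1) = u ^ (2*α-1-4*ε-1) := by
        rw [← Real.rpow_add h0]; congr 1; ring
      have hUSB : u^(-(4*ε)) * u ^ (2*β-1-1) = u ^ (2*β-1-4*ε-1) := by
        rw [← Real.rpow_add h0]; congr 1; ring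
      have hS1 : (0:ℝ) ≤ u ^ (2*α-1-1) := (Real.rpow_pos_of_pos h0 _).le
      have hS2 : (0:ℝ) ≤ u ^ (2*β-1-1) := (Real.rpow_pos_of_pos h0 _).le
      calc (u ^ (α-1) - u ^ (β-1)) ^ 2 * (Real.log u) ^ 2
          ≤ ((α-β)^2 * (Real.log u)^2 * (u ^ (α-1) + u ^ (β-1))^2) * (Real.log u)^2 :=
            mul_le_mul_of_nonneg_right e1 (sq_nonneg _)
        _ = (α-β)^2 * (Real.log u)^4 * (u ^ (α-1) + u ^ (β-1))^2 := by ring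
        _ ≤ (α-β)^2 * (Real.log u)^4 * (2*(u ^ (2*α-1-1) + u ^ (2*β-1-1))) :=
            mul_le_mul_of_nonneg_left e2 (by positivity)
        _ = ((α-β)^2 * (2*(u ^ (2*α-1-1) + u ^ (2*β-1-1)))) * (Real.log u)^4 := by ring
        _ ≤ ((α-β)^2 * (2*(u ^ (2*α-1-1) + u ^ (2*β-1-1))))
              * (8*(Real.log t)^4 + 8*(t^(4*ε)/ε^4) * u^(-(4*ε))) := by
            apply mul_le_mul_of_nonneg_left e3
            positivity
        _ = 16*(α-β)^2*(Real.log t)^4 * (u ^ (2*α-1-1) + u ^ (2*β-1-1))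
              + 16*(α-β)^2*(t^(4*ε)/ε^4)
                * (u^(-(4*ε)) * u ^ (2*α-1-1) + u^(-(4*ε)) * u ^ (2*β-1-1)) := by ring
        _ = _ := by rw [hUSA, hUSB]
  -- integrability
  have hi1 := kdsl_rpow_int (2*α-1) hp1 t
  have hi2 := kdsl_rpow_int (2*β-1) hp2 t
  have hi3 := kdsl_rpow_int (2*α-1-4*ε) hp3 t
  have hi4 := kdsl_rpow_int (2*β-1-4*ε) hp4 t
  have hMint : IntervalIntegrable (fun u : ℝ =>
      16*(α-β)^2*(Real.log t)^4 * (u ^ (2*α-1-1) + u ^ (2*β-1-1))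
        + 16*(α-β)^2*(t^(4*ε)/ε^4) * (u ^ (2*α-1-4*ε-1) + u ^ (2*β-1-4*ε-1)))
      volume 0 t :=
    ((hi1.add hi2).const_mul _).add ((hi3.add hi4).const_mul _)
  have hfint : IntervalIntegrable
      (fun u : ℝ => (u ^ (α-1) - u ^ (β-1)) ^ 2 * (Real.log u) ^ 2) volume 0 t := by
    have hsub : Set.Ioc (0:ℝ) t ⊆ {(0:ℝ)}ᶜ := by
      intro x hx
      simp only [Set.mem_compl_iff, Set.mem_singleton_iff]
      exact ne_of_gt hx.1
    have c1 : ContinuousOn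
        (fun u : ℝ => (u ^ (α-1) - u ^ (β-1)) ^ 2 * (Real.log u) ^ 2) (Set.Ioc 0 t) := by
      apply ContinuousOn.mul
      · exact ((continuousOn_id.rpow_const (fun x hx => Or.inl (ne_of_gt hx.1))).sub
          (continuousOn_id.rpow_const (fun x hx => Or.inl (ne_of_gt hx.1)))).pow 2
      · exact (Real.continuousOn_log.mono hsub).pow 2
    apply hMint.mono_fun
    · rw [Set.uIoc_of_le ht.le]
      exact c1.aestronglyMeasurable measurableSet_Ioc
    · rw [Set.uIoc_of_le ht.le]
      refine MeasureTheory.ae_restrict_of_forall_mem measurableSet_Ioc ?_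
      intro u hu
      have hb := hpt u ⟨hu.1.le, hu.2⟩
      have hnn : (0:ℝ) ≤ (u ^ (α-1) - u ^ (β-1)) ^ 2 * (Real.log u) ^ 2 := by positivity
      simp only [Real.norm_eq_abs]
      rw [abs_of_nonneg hnn]
      exact hb.trans (le_abs_self _)
  -- main estimate
  calc (∫ u in (0:ℝ)..t, (u ^ (α-1) - u ^ (β-1)) ^ 2 * (Real.log u) ^ 2)
      ≤ ∫ u in (0:ℝ)..t,
          (16*(α-β)^2*(Real.log t)^4 * (u ^ (2*α-1-1) + u ^ (2*β-1-1))
            + 16*(α-β)^2*(t^(4*ε)/ε^4) * (u ^ (2*α-1-4*ε-1) + u ^ (2*β-1-4*ε-1))) :=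
        intervalIntegral.integral_mono_on ht.le hfint hMint hpt
    _ = 16*(α-β)^2*(Real.log t)^4 * (t^(2*α-1)/(2*α-1) + t^(2*β-1)/(2*β-1))
          + 16*(α-β)^2*(t^(4*ε)/ε^4)
            * (t^(2*α-1-4*ε)/(2*α-1-4*ε) + t^(2*β-1-4*ε)/(2*β-1-4*ε)) := by
        rw [intervalIntegral.integral_add ((hi1.add hi2).const_mul _)
            ((hi3.add hi4).const_mul _),
          intervalIntegral.integral_const_mul, intervalIntegral.integral_const_mul,
          intervalIntegral.integral_add hi1 hi2, intervalIntegral.integral_add hi3 hi4,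
          kdsl_rpow_val (2*α-1) t hp1, kdsl_rpow_val (2*β-1) t hp2,
          kdsl_rpow_val (2*α-1-4*ε) t hp3, kdsl_rpow_val (2*β-1-4*ε) t hp4]
    _ ≤ (16/a0 + 32/(ε^4 * a0)) * (t ^ (2 * α - 1) + t ^ (2 * β - 1))
          * ((Real.log t) ^ 4 + 1) * (α - β) ^ 2 := by
        have key1 : t^(4*ε) * t^(2*α-1-4*ε) = t^(2*α-1) := by
          rw [← Real.rpow_add ht]; congr 1; ring
        have key2 : t^(4*ε) * t^(2*β-1-4*ε) = t^(2*β-1) := by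
          rw [← Real.rpow_add ht]; congr 1; ring
        have hP : (0:ℝ) < t^(2*α-1) := Real.rpow_pos_of_pos ht _
        have hQ : (0:ℝ) < t^(2*β-1) := Real.rpow_pos_of_pos ht _
        have hG : (0:ℝ) ≤ (Real.log t)^4 := by positivity
        have hD : (0:ℝ) ≤ (α-β)^2 := sq_nonneg _
        have e0 : 16*(α-β)^2*(t^(4*ε)/ε^4)
              * (t^(2*α-1-4*ε)/(2*α-1-4*ε) + t^(2*β-1-4*ε)/(2*β-1-4*ε))
            = 16*(α-β)^2
              * (t^(2*α-1)/(ε^4*(2*α-1-4*ε)) + t^(2*β-1)/(ε^4*(2*β-1-4*ε))) := by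
          rw [show 16*(α-β)^2*(t^(4*ε)/ε^4)
                * (t^(2*α-1-4*ε)/(2*α-1-4*ε) + t^(2*β-1-4*ε)/(2*β-1-4*ε))
              = 16*(α-β)^2 * (t^(4*ε)/ε^4 * (t^(2*α-1-4*ε)/(2*α-1-4*ε))
                + t^(4*ε)/ε^4 * (t^(2*β-1-4*ε)/(2*β-1-4*ε))) from by ring,
            div_mul_div_comm, div_mul_div_comm, key1, key2]
        rw [e0]
        have b1 : t^(2*α-1)/(2*α-1) ≤ t^(2*α-1)/a0 :=
          div_le_div_of_nonneg_left hP.le ha h2α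
        have b2 : t^(2*β-1)/(2*β-1) ≤ t^(2*β-1)/a0 :=
          div_le_div_of_nonneg_left hQ.le ha h2β
        have b3 : t^(2*α-1)/(ε^4*(2*α-1-4*ε)) ≤ t^(2*α-1)/(ε^4*(a0/2)) :=
          div_le_div_of_nonneg_left hP.le (by positivity)
            (by apply mul_le_mul_of_nonneg_left h2α' hE.le)
        have b4 : t^(2*β-1)/(ε^4*(2*β-1-4*ε)) ≤ t^(2*β-1)/(ε^4*(a0/2)) :=
          div_le_div_of_nonneg_left hQ.le (by positivity)
            (by apply mul_le_mul_of_nonneg_left h2β' hE.le)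
        have step : 16*(α-β)^2*(Real.log t)^4 * (t^(2*α-1)/(2*α-1) + t^(2*β-1)/(2*β-1))
              + 16*(α-β)^2
                * (t^(2*α-1)/(ε^4*(2*α-1-4*ε)) + t^(2*β-1)/(ε^4*(2*β-1-4*ε)))
            ≤ 16*(α-β)^2*(Real.log t)^4 * (t^(2*α-1)/a0 + t^(2*β-1)/a0)
              + 16*(α-β)^2
                * (t^(2*α-1)/(ε^4*(a0/2)) + t^(2*β-1)/(ε^4*(a0/2))) := by
          have c1 : (0:ℝ) ≤ 16*(α-β)^2*(Real.log t)^4 := by positivity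
          have c2 : (0:ℝ) ≤ 16*(α-β)^2 := by positivity
          nlinarith [mul_le_mul_of_nonneg_left (add_le_add b1 b2) c1,
            mul_le_mul_of_nonneg_left (add_le_add b3 b4) c2]
        refine step.trans ?_
        have hinv : (0:ℝ) ≤ a0⁻¹ := (inv_nonneg).2 ha.le
        have hinv2 : (0:ℝ) ≤ (ε^4*a0)⁻¹ := (inv_nonneg).2 (by positivity)
        have hh1 : (0:ℝ) ≤ 16*(α-β)^2*(t^(2*α-1)+t^(2*β-1))*a0⁻¹ := by positivity
        have hh2 : (0:ℝ) ≤ 32*(t^(2*α-1)+t^(2*β-1))*(Real.log t)^4*(α-β)^2*(ε^4*a0)⁻¹ := by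
          positivity
        have expand : t^(2*α-1)/(ε^4*(a0/2)) = 2*t^(2*α-1)*(ε^4*a0)⁻¹ := by
          field_simp [hε.ne', ha.ne']
        have expand2 : t^(2*β-1)/(ε^4*(a0/2)) = 2*t^(2*β-1)*(ε^4*a0)⁻¹ := by
          field_simp [hε.ne', ha.ne']
        rw [expand, expand2]
        have goal_eq : (16/a0 + 32/(ε^4 * a0)) * (t ^ (2 * α - 1) + t ^ (2 * β - 1))
              * ((Real.log t) ^ 4 + 1) * (α - β) ^ 2
            = 16*(α-β)^2*((Real.log t)^4+1)*(t^(2*α-1)+t^(2*β-1))*a0⁻¹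
              + 32*(α-β)^2*((Real.log t)^4+1)*(t^(2*α-1)+t^(2*β-1))*(ε^4*a0)⁻¹ := by
          field_simp [hε.ne', ha.ne']
        rw [goal_eq]
        have key : 16*(α-β)^2*((Real.log t)^4+1)*(t^(2*α-1)+t^(2*β-1))*a0⁻¹
              + 32*(α-β)^2*((Real.log t)^4+1)*(t^(2*α-1)+t^(2*β-1))*(ε^4*a0)⁻¹
            = (16*(α-β)^2*(Real.log t)^4 * (t^(2*α-1)/a0 + t^(2*β-1)/a0)
                + 16*(α-β)^2 * (2*t^(2*α-1)*(ε^4*a0)⁻¹ + 2*t^(2*β-1)*(ε^4*a0)⁻¹))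
              + (16*(α-β)^2*(t^(2*α-1)+t^(2*β-1))*a0⁻¹
                + 32*(t^(2*α-1)+t^(2*β-1))*(Real.log t)^4*(α-β)^2*(ε^4*a0)⁻¹) := by
          ring
        linarith [hh1, hh2, key]
end

section
/- Let α₀ satisfy 1/2 < α₀ < 1 and T > 0. Define, for α, β in [α₀, 1] and 0 ≤ s < t ≤ T, the remainder R₂(α, β, t, s) := ∫₀¹ ((t−s)^{β−1+θ(α−β)} − (t−s)^{β−1}) · ln(t−s) dθ. Then there exists a positive constant C depending only on T and α₀ such that for all α, β in [α₀, 1] and all t ∈ [0, T], ∫₀ᵗ |R₂(α, β, t, s)|² ds ≤ C · (α − β)². -/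
open MeasureTheory intervalIntegral Set

private lemma exp_abs_diff (a b : ℝ) :
    |Real.exp a - Real.exp b| ≤ |a - b| * max (Real.exp a) (Real.exp b) := by
  wlog h : b ≤ a generalizing a b
  · rw [abs_sub_comm, abs_sub_comm a b, max_comm]
    exact this b a (le_of_not_ge h)
  rw [abs_of_nonneg (sub_nonneg.2 (Real.exp_le_exp.2 h)), abs_of_nonneg (sub_nonneg.2 h)]
  have h2 : Real.exp b = Real.exp a * Real.exp (b - a) := by
    rw [← Real.exp_add]; ring_nf
  have h1 : Real.exp a - Real.exp b ≤ Real.exp a * (a - b) := by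
    nlinarith [Real.add_one_le_exp (b - a), Real.exp_pos a]
  calc Real.exp a - Real.exp b ≤ Real.exp a * (a - b) := h1
    _ ≤ max (Real.exp a) (Real.exp b) * (a - b) :=
        mul_le_mul_of_nonneg_right (le_max_left _ _) (sub_nonneg.2 h)
    _ = (a - b) * max (Real.exp a) (Real.exp b) := mul_comm _ _

private lemma rpow_le_add_one {x p c : ℝ} (hx : 0 < x) (hcp : c ≤ p) (hp0 : p ≤ 0) :
    x ^ p ≤ x ^ c + 1 := by
  rcases le_total x 1 with h | h
  · have := Real.rpow_le_rpow_of_exponent_ge hx h hcp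
    linarith
  · have h1 : x ^ p ≤ 1 := Real.rpow_le_one_of_one_le_of_nonpos h hp0
    have h2 : 0 ≤ x ^ c := Real.rpow_nonneg hx.le c
    linarith

private lemma rpow_diff_le {x p q c : ℝ} (hx : 0 < x) (hcp : c ≤ p) (hp0 : p ≤ 0)
    (hcq : c ≤ q) (hq0 : q ≤ 0) :
    |x ^ p - x ^ q| ≤ |p - q| * |Real.log x| * (x ^ c + 1) := by
  rw [Real.rpow_def_of_pos hx p, Real.rpow_def_of_pos hx q]
  calc |Real.exp (Real.log x * p) - Real.exp (Real.log x * q)|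
      ≤ |Real.log x * p - Real.log x * q| *
          max (Real.exp (Real.log x * p)) (Real.exp (Real.log x * q)) := exp_abs_diff _ _
    _ ≤ (|p - q| * |Real.log x|) * (x ^ c + 1) := by
        apply mul_le_mul
        · exact le_of_eq (by rw [← mul_sub, abs_mul, mul_comm])
        · rw [← Real.rpow_def_of_pos hx, ← Real.rpow_def_of_pos hx]
          exact max_le (rpow_le_add_one hx hcp hp0) (rpow_le_add_one hx hcq hq0)
        · positivity
        · positivity
    _ = |p - q| * |Real.log x| * (x ^ c + 1) := rfl

private lemma abs_log_le_of_le_one {u ε : ℝ} (hu : 0 < u) (hu1 : u ≤ 1) (hε : 0 < ε) :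
    |Real.log u| ≤ u ^ (-ε) / ε := by
  rw [abs_of_nonpos (Real.log_nonpos hu.le hu1)]
  have h := Real.log_le_rpow_div (x := u⁻¹) (inv_nonneg.2 hu.le) hε
  rw [Real.log_inv] at h
  have he : u⁻¹ ^ ε = u ^ (-ε) := by
    rw [Real.inv_rpow hu.le, ← Real.rpow_neg hu.le]
  rw [he] at h
  linarith

/-- Let `1/2 < α₀ < 1` and `T > 0`. Define, for `α, β ∈ [α₀, 1]` and `0 ≤ s < t ≤ T`,
`R₂(α, β, t, s) := ∫₀¹ ((t−s)^(β−1+θ(α−β)) − (t−s)^(β−1)) ln(t−s) dθ`. Then there exists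
a constant `C > 0` depending only on `T` and `α₀` such that for all `α, β ∈ [α₀, 1]` and
all `t ∈ [0, T]`, `∫₀ᵗ |R₂(α, β, t, s)|² ds ≤ C (α − β)²`. -/
theorem remainder_R2_square_integral_bound (α₀ T : ℝ) (h₁ : 1 / 2 < α₀) (h₂ : α₀ < 1)
    (hT : 0 < T)
    (R₂ : ℝ → ℝ → ℝ → ℝ → ℝ)
    (hR₂ : ∀ α β t s : ℝ, α ∈ Set.Icc α₀ 1 → β ∈ Set.Icc α₀ 1 →
      0 ≤ s → s < t → t ≤ T →
      R₂ α β t s = ∫ θ in (0 : ℝ)..1,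
        ((t - s) ^ (β - 1 + θ * (α - β)) - (t - s) ^ (β - 1)) * Real.log (t - s)) :
    ∃ C : ℝ, 0 < C ∧ ∀ α β : ℝ, α ∈ Set.Icc α₀ 1 → β ∈ Set.Icc α₀ 1 →
      ∀ t ∈ Set.Icc (0 : ℝ) T,
        (∫ s in (0 : ℝ)..t, |R₂ α β t s| ^ 2) ≤ C * (α - β) ^ 2 := by
  set ε : ℝ := (α₀ - 1/2) / 4 with hεdef
  have hε : 0 < ε := by rw [hεdef]; linarith
  set e₁ : ℝ := α₀ - 3/2 with he₁def
  have he₁ : (-1 : ℝ) < e₁ := by rw [he₁def]; linarith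
  set T' : ℝ := max T 1 with hT'def
  have hT'1 : (1 : ℝ) ≤ T' := le_max_right T 1
  set K : ℝ := 4 * (1/ε)^4 * (1 + T' ^ (4*ε)) with hKdef
  have hTK : (0:ℝ) ≤ T' ^ (4*ε) := Real.rpow_nonneg (by positivity) _
  have hK : 0 < K := by rw [hKdef]; positivity
  set DOM : ℝ → ℝ := fun u => K * (u ^ e₁ + 1) with hDOMdef
  have hDOMint : IntervalIntegrable DOM volume 0 T := by
    rw [hDOMdef]
    exact (((intervalIntegral.intervalIntegrable_rpow' he₁).add
      intervalIntegrable_const).const_mul K)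
  have hDOMnonneg : ∀ u : ℝ, 0 ≤ u → 0 ≤ DOM u := by
    intro u hu
    exact mul_nonneg hK.le (add_nonneg (Real.rpow_nonneg hu _) zero_le_one)
  set C₀ : ℝ := ∫ u in (0:ℝ)..T, DOM u with hC₀def
  have hC₀nonneg : 0 ≤ C₀ := by
    rw [hC₀def]
    exact intervalIntegral.integral_nonneg hT.le (fun u hu => hDOMnonneg u hu.1)
  -- the key analytic bound: G(u) ≤ DOM u on (0, T]
  have hGDOM : ∀ u : ℝ, 0 < u → u ≤ T →
      |Real.log u| ^ 4 * (u ^ (α₀ - 1) + 1) ^ 2 ≤ DOM u := by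
    intro u hu huT
    have hue₁ : (0:ℝ) ≤ u ^ e₁ := Real.rpow_nonneg hu.le _
    rcases le_total u 1 with hu1 | hu1
    · -- u ≤ 1
      have hL : |Real.log u| ≤ u ^ (-ε) / ε := abs_log_le_of_le_one hu hu1 hε
      have hA : u ^ (α₀ - 1) + 1 ≤ 2 * u ^ (α₀ - 1) := by
        have : (1:ℝ) ≤ u ^ (α₀ - 1) :=
          Real.one_le_rpow_of_pos_of_le_one_of_nonpos hu hu1 (by linarith)
        linarith
      have step : |Real.log u| ^ 4 * (u ^ (α₀ - 1) + 1) ^ 2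
          ≤ (u ^ (-ε) / ε) ^ 4 * (2 * u ^ (α₀ - 1)) ^ 2 := by
        have h1 : |Real.log u| ^ 4 ≤ (u ^ (-ε) / ε) ^ 4 :=
          pow_le_pow_left₀ (abs_nonneg _) hL 4
        have h2 : (u ^ (α₀ - 1) + 1) ^ 2 ≤ (2 * u ^ (α₀ - 1)) ^ 2 :=
          pow_le_pow_left₀ (by positivity) hA 2
        exact mul_le_mul h1 h2 (by positivity) (by positivity)
      have heq : (u ^ (-ε) / ε) ^ 4 * (2 * u ^ (α₀ - 1)) ^ 2
          = 4 * (1/ε)^4 * u ^ e₁ := by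
        have e1 : (u ^ (-ε)) ^ (4:ℕ) = u ^ (-ε * 4) := by
          rw [← Real.rpow_natCast (u ^ (-ε)) 4, ← Real.rpow_mul hu.le]
          norm_num
        have e2 : (u ^ (α₀ - 1)) ^ (2:ℕ) = u ^ ((α₀ - 1) * 2) := by
          rw [← Real.rpow_natCast (u ^ (α₀ - 1)) 2, ← Real.rpow_mul hu.le]
          norm_num
        have e3 : u ^ (-ε * 4) * u ^ ((α₀ - 1) * 2) = u ^ e₁ := by
          rw [← Real.rpow_add hu]
          congr 1
          rw [hεdef, he₁def]; ring
        calc (u ^ (-ε) / ε) ^ 4 * (2 * u ^ (α₀ - 1)) ^ 2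
            = 4 * (1/ε)^4 * ((u ^ (-ε)) ^ (4:ℕ) * (u ^ (α₀ - 1)) ^ (2:ℕ)) := by ring
          _ = 4 * (1/ε)^4 * u ^ e₁ := by rw [e1, e2, e3]
      have hKge : 4 * (1/ε)^4 ≤ K := by
        rw [hKdef]
        exact le_mul_of_one_le_right (by positivity) (by linarith)
      calc |Real.log u| ^ 4 * (u ^ (α₀ - 1) + 1) ^ 2
          ≤ 4 * (1/ε)^4 * u ^ e₁ := by rw [← heq]; exact step
        _ ≤ K * u ^ e₁ := mul_le_mul_of_nonneg_right hKge hue₁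
        _ ≤ K * (u ^ e₁ + 1) := mul_le_mul_of_nonneg_left (by linarith) hK.le
        _ = DOM u := rfl
    · -- 1 ≤ u
      have hL : |Real.log u| ≤ T' ^ ε / ε := by
        rw [abs_of_nonneg (Real.log_nonneg hu1)]
        have h := Real.log_le_rpow_div hu.le hε
        have h2 : u ^ ε ≤ T' ^ ε :=
          Real.rpow_le_rpow hu.le (le_trans huT (le_max_left T 1)) hε.le
        calc Real.log u ≤ u ^ ε / ε := h
          _ ≤ T' ^ ε / ε := by gcongr
      have hA : u ^ (α₀ - 1) + 1 ≤ 2 := by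
        have := Real.rpow_le_one_of_one_le_of_nonpos hu1 (by linarith : α₀ - 1 ≤ 0)
        linarith
      have step : |Real.log u| ^ 4 * (u ^ (α₀ - 1) + 1) ^ 2
          ≤ (T' ^ ε / ε) ^ 4 * 2 ^ 2 := by
        have h1 : |Real.log u| ^ 4 ≤ (T' ^ ε / ε) ^ 4 :=
          pow_le_pow_left₀ (abs_nonneg _) hL 4
        have h2 : (u ^ (α₀ - 1) + 1) ^ 2 ≤ 2 ^ 2 :=
          pow_le_pow_left₀ (by positivity) hA 2
        exact mul_le_mul h1 h2 (by positivity) (by positivity)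
      have heq : (T' ^ ε / ε) ^ 4 * 2 ^ 2 = 4 * (1/ε)^4 * T' ^ (4*ε) := by
        have e1 : (T' ^ ε) ^ (4:ℕ) = T' ^ (4*ε) := by
          rw [← Real.rpow_natCast (T' ^ ε) 4, ← Real.rpow_mul (by positivity : (0:ℝ) ≤ T')]
          norm_num [mul_comm]
        calc (T' ^ ε / ε) ^ 4 * 2 ^ 2 = 4 * (1/ε)^4 * (T' ^ ε) ^ (4:ℕ) := by ring
          _ = 4 * (1/ε)^4 * T' ^ (4*ε) := by rw [e1]
      have hKge : 4 * (1/ε)^4 * T' ^ (4*ε) ≤ K := by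
        rw [hKdef]
        have : (0:ℝ) ≤ 4 * (1/ε)^4 := by positivity
        nlinarith
      calc |Real.log u| ^ 4 * (u ^ (α₀ - 1) + 1) ^ 2
          ≤ 4 * (1/ε)^4 * T' ^ (4*ε) := by rw [← heq]; exact step
        _ ≤ K := hKge
        _ ≤ K * (u ^ e₁ + 1) := le_mul_of_one_le_right hK.le (by linarith)
        _ = DOM u := rfl
  refine ⟨C₀ + 1, by linarith, ?_⟩
  intro α β hα hβ t ht
  obtain ⟨ht0, htT⟩ := ht
  rcases eq_or_lt_of_le ht0 with h0 | h0
  · rw [← h0, intervalIntegral.integral_same]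
    positivity
  -- pointwise bound on |R₂|²
  have key : ∀ s ∈ Set.Ioo (0:ℝ) t, |R₂ α β t s| ^ 2 ≤ (α - β) ^ 2 * DOM (t - s) := by
    intro s hs
    set x : ℝ := t - s with hxdef
    have hx : 0 < x := sub_pos.2 hs.2
    have hxT : x ≤ T := by rw [hxdef]; linarith [hs.1]
    have hxs : t - s = x := hxdef.symm
    have step1 : |R₂ α β t s| ≤ |α - β| * |Real.log x| ^ 2 * (x ^ (α₀ - 1) + 1) := by
      rw [hR₂ α β t s hα hβ hs.1.le hs.2 htT, hxs]
      have hb : ∀ θ ∈ Set.uIoc (0:ℝ) 1,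
          ‖(x ^ (β - 1 + θ * (α - β)) - x ^ (β - 1)) * Real.log x‖
            ≤ |α - β| * |Real.log x| ^ 2 * (x ^ (α₀ - 1) + 1) := by
        intro θ hθ
        rw [Set.uIoc_of_le zero_le_one] at hθ
        have hθ0 : 0 ≤ θ := hθ.1.le
        have hθ1 : θ ≤ 1 := hθ.2
        have hp1 : α₀ - 1 ≤ β - 1 + θ * (α - β) := by
          nlinarith [hα.1, hβ.1, hα.2, hβ.2]
        have hp2 : β - 1 + θ * (α - β) ≤ 0 := by
          nlinarith [hα.1, hβ.1, hα.2, hβ.2]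
        have hq1 : α₀ - 1 ≤ β - 1 := by linarith [hβ.1]
        have hq2 : β - 1 ≤ 0 := by linarith [hβ.2]
        have hd := rpow_diff_le (p := β - 1 + θ * (α - β)) (q := β - 1) (c := α₀ - 1)
          hx hp1 hp2 hq1 hq2
        have hpq : |(β - 1 + θ * (α - β)) - (β - 1)| ≤ |α - β| := by
          have he : (β - 1 + θ * (α - β)) - (β - 1) = θ * (α - β) := by ring
          rw [he, abs_mul, abs_of_nonneg hθ0]
          exact mul_le_of_le_one_left (abs_nonneg _) hθ1
        rw [Real.norm_eq_abs, abs_mul]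
        calc |x ^ (β - 1 + θ * (α - β)) - x ^ (β - 1)| * |Real.log x|
            ≤ (|(β - 1 + θ * (α - β)) - (β - 1)| * |Real.log x| * (x ^ (α₀ - 1) + 1))
                * |Real.log x| := mul_le_mul_of_nonneg_right hd (abs_nonneg _)
          _ ≤ (|α - β| * |Real.log x| * (x ^ (α₀ - 1) + 1)) * |Real.log x| := by
              have hrp : (0:ℝ) ≤ x ^ (α₀ - 1) + 1 := by positivity
              exact mul_le_mul_of_nonneg_right (mul_le_mul_of_nonneg_right
                (mul_le_mul_of_nonneg_right hpq (abs_nonneg _)) hrp) (abs_nonneg _)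
          _ = |α - β| * |Real.log x| ^ 2 * (x ^ (α₀ - 1) + 1) := by ring
      have h := intervalIntegral.norm_integral_le_of_norm_le_const hb
      rw [Real.norm_eq_abs] at h
      simpa using h
    have step2 : |R₂ α β t s| ^ 2
        ≤ (α - β) ^ 2 * (|Real.log x| ^ 4 * (x ^ (α₀ - 1) + 1) ^ 2) := by
      have := pow_le_pow_left₀ (abs_nonneg _) step1 2
      calc |R₂ α β t s| ^ 2 ≤ (|α - β| * |Real.log x| ^ 2 * (x ^ (α₀ - 1) + 1)) ^ 2 := this
        _ = (α - β) ^ 2 * (|Real.log x| ^ 4 * (x ^ (α₀ - 1) + 1) ^ 2) := by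
            rw [mul_pow, mul_pow, sq_abs]; ring
    calc |R₂ α β t s| ^ 2
        ≤ (α - β) ^ 2 * (|Real.log x| ^ 4 * (x ^ (α₀ - 1) + 1) ^ 2) := step2
      _ ≤ (α - β) ^ 2 * DOM x := by
          exact mul_le_mul_of_nonneg_left (hGDOM x hx hxT) (sq_nonneg _)
  -- integrate
  have hDOMt : IntervalIntegrable DOM volume 0 t :=
    hDOMint.mono_set (by rw [Set.uIcc_of_le h0.le, Set.uIcc_of_le hT.le]
                         exact Set.Icc_subset_Icc le_rfl htT)
  have hcomp : IntervalIntegrable (fun s => (α - β) ^ 2 * DOM (t - s)) volume 0 t := by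
    have h := (hDOMt.comp_sub_left t).symm
    simpa using h.const_mul ((α - β) ^ 2)
  calc (∫ s in (0:ℝ)..t, |R₂ α β t s| ^ 2)
      ≤ ∫ s in (0:ℝ)..t, (α - β) ^ 2 * DOM (t - s) := by
        rw [intervalIntegral.integral_of_le h0.le, intervalIntegral.integral_of_le h0.le,
          MeasureTheory.integral_Ioc_eq_integral_Ioo, MeasureTheory.integral_Ioc_eq_integral_Ioo]
        apply MeasureTheory.integral_mono_of_nonneg
        · exact Filter.Eventually.of_forall (fun s => by positivity)
        · exact hcomp.1.mono_set Set.Ioo_subset_Ioc_self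
        · exact (MeasureTheory.ae_restrict_iff' measurableSet_Ioo).2
            (Filter.Eventually.of_forall key)
    _ = (α - β) ^ 2 * ∫ s in (0:ℝ)..t, DOM (t - s) := intervalIntegral.integral_const_mul _ _
    _ = (α - β) ^ 2 * ∫ u in (0:ℝ)..t, DOM u := by
        rw [intervalIntegral.integral_comp_sub_left DOM t]
        norm_num
    _ ≤ (α - β) ^ 2 * C₀ := by
        apply mul_le_mul_of_nonneg_left _ (sq_nonneg _)
        rw [hC₀def]
        apply intervalIntegral.integral_mono_interval le_rfl h0.le htT _ hDOMint
        apply (MeasureTheory.ae_restrict_iff' measurableSet_Ioc).2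
        exact Filter.Eventually.of_forall (fun u hu => hDOMnonneg u hu.1.le)
    _ ≤ (C₀ + 1) * (α - β) ^ 2 := by nlinarith [sq_nonneg (α - β)]
end

section
/- Let T > 0, let a > 0 and 0 < η < 1, let ω : [0,T] → [0,∞) be continuous, and let v : [0,T] → [0,∞) be a bounded measurable function satisfying v(t) ≤ ω(t) + a ∫₀ᵗ (t−s)^{η−1} v(s) ds for all t ∈ [0,T]. Then for all t ∈ [0,T], v(t) ≤ 2ω(t) + (8 a t^{η/2} / η) · exp(4^{2/η} a^{2/η} t² / η^{2/η}) · (∫₀ᵗ ω(s)^{2/η} ds)^{η/2}. -/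
/-!
Write `q = 2/η` and `V t = ∫₀ᵗ v^q`. Since `(t - s)^(η - 1)` lies in `L^(2/(2-η))`, Hölder's
inequality with the conjugate exponents `2/(2-η)` and `q` turns the hypothesis into
`v ≤ ω + D V^(1/q)` on `[0, t₀]`, with `D = (2a/η) t₀^(η/2)`. Raising this to the power `q` and
integrating gives the regular linear inequality `V t ≤ 2^q ∫₀^t₀ ω^q + 2^q D^q ∫₀ᵗ V`, so the
classical Gronwall lemma bounds `V`; substituting back into `v ≤ ω + D V^(1/q)` gives the estimate.
-/

open MeasureTheory Set Real Topology

theorem MeasureTheory.MemLp.integrable_rpow_of_nonneg {α : Type*} [MeasurableSpace α]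
    {μ : Measure α} {f : α → ℝ} {p : ℝ} (hp : 0 < p) (hf : MemLp f (ENNReal.ofReal p) μ)
    (hf_nonneg : 0 ≤ᵐ[μ] f) : Integrable (fun x => f x ^ p) μ := by
  refine (hf.integrable_norm_rpow (by simpa using hp) ENNReal.ofReal_ne_top).congr ?_
  filter_upwards [hf_nonneg] with x hx
  rw [Real.norm_of_nonneg hx, ENNReal.toReal_ofReal hp.le]

theorem le_mul_exp_of_le_add_mul_integral {V : ℝ → ℝ} {A B a b : ℝ} (hB : 0 ≤ B)
    (hV : ContinuousOn V (Icc a b)) (h : ∀ t ∈ Icc a b, V t ≤ A + B * ∫ s in a..t, V s) :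
    ∀ t ∈ Icc a b, V t ≤ A * exp (B * (t - a)) := by
  -- `U = ∫ V` satisfies `U' = V ≤ A + B U`, so the differential Gronwall bound applies to `U`.
  set U : ℝ → ℝ := fun t => ∫ s in a..t, V s
  have hU_cont : ContinuousOn U (Icc a b) := by
    rcases le_or_gt a b with hab | hab
    · simpa only [uIcc_of_le hab] using
        intervalIntegral.continuousOn_primitive_interval
          (hV.integrableOn_Icc.mono_set (uIcc_of_le hab).subset)
    · simp [Icc_eq_empty_of_lt hab]
  have hU_deriv : ∀ x ∈ Ico a b, HasDerivWithinAt U (V x) (Ici x) x := by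
    intro x hx
    have hmem : Icc a b ∈ 𝓝[>] x := Icc_mem_nhdsGT_of_mem hx
    exact intervalIntegral.integral_hasDerivWithinAt_right
      ((hV.mono (Icc_subset_Icc_right hx.2.le)).intervalIntegrable_of_Icc hx.1)
      ((hV.stronglyMeasurableAtFilter_nhdsWithin measurableSet_Icc x).filter_mono
        (nhdsWithin_le_of_mem hmem))
      ((hV x (Ico_subset_Icc_self hx)).mono_of_mem_nhdsWithin hmem)
  have hU : ∀ t ∈ Icc a b, U t ≤ gronwallBound 0 B A (t - a) :=
    le_gronwallBound_of_liminf_deriv_right_le hU_cont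
      (fun x hx _ hr => (hU_deriv x hx).liminf_right_slope_le hr) (by simp [U])
      (fun x hx => by linarith [h x (Ico_subset_Icc_self hx)])
  intro t ht
  calc V t ≤ A + B * U t := h t ht
    _ ≤ A + B * gronwallBound 0 B A (t - a) := by gcongr; exact hU t ht
    _ = A * exp (B * (t - a)) := by
      rcases hB.eq_or_lt with rfl | hB
      · simp [gronwallBound_K0]
      · rw [gronwallBound_of_K_ne_0 hB.ne']
        field_simp
        ring

theorem integral_sub_rpow {r t : ℝ} (hr : -1 < r) :
    ∫ s in 0..t, (t - s) ^ r = t ^ (r + 1) / (r + 1) := by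
  rw [intervalIntegral.integral_comp_sub_left (fun u => u ^ r), sub_self, sub_zero,
    integral_rpow (Or.inl hr), zero_rpow (by linarith), sub_zero]

theorem memLp_sub_rpow {p r t : ℝ} (hp : 0 < p) (hr : -1 < r * p) :
    MemLp (fun s => (t - s) ^ r) (ENNReal.ofReal p) (volume.restrict (Ioc 0 t)) := by
  have hp₀ : ENNReal.ofReal p ≠ 0 := by simpa using hp
  have hmeas : Measurable fun s : ℝ => (t - s) ^ r :=
    (measurable_const.sub measurable_id).pow_const r
  rw [← memLp_norm_rpow_iff hmeas.aestronglyMeasurable hp₀ ENNReal.ofReal_ne_top,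
    ENNReal.div_self hp₀ ENNReal.ofReal_ne_top, ENNReal.toReal_ofReal hp.le,
    memLp_one_iff_integrable]
  have hint : IntegrableOn (fun s => (t - s) ^ (r * p)) (Ioc 0 t) := by
    have := ((intervalIntegral.intervalIntegrable_rpow' (a := 0) (b := t) hr).comp_sub_left t).symm
    rw [sub_zero, sub_self] at this
    exact this.1
  refine hint.congr_fun (fun s hs => ?_) measurableSet_Ioc
  have hts : 0 ≤ t - s := sub_nonneg.2 hs.2
  rw [Real.norm_of_nonneg (rpow_nonneg hts _), ← rpow_mul hts]

theorem integral_sub_rpow_mul_le {p q r t : ℝ} {v : ℝ → ℝ} (hpq : p.HolderConjugate q)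
    (hr : -1 < r * p) (ht : 0 ≤ t) (hv_nonneg : ∀ s ∈ Ioc 0 t, 0 ≤ v s)
    (hv : MemLp v (ENNReal.ofReal q) (volume.restrict (Ioc 0 t))) :
    ∫ s in 0..t, (t - s) ^ r * v s ≤
      (t ^ (r * p + 1) / (r * p + 1)) ^ (1 / p) * (∫ s in 0..t, v s ^ q) ^ (1 / q) := by
  have hker : ∫ s in Ioc 0 t, ((t - s) ^ r) ^ p = t ^ (r * p + 1) / (r * p + 1) := by
    rw [← integral_sub_rpow hr, intervalIntegral.integral_of_le ht]
    refine setIntegral_congr_fun measurableSet_Ioc fun s hs => ?_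
    rw [← rpow_mul (sub_nonneg.2 hs.2)]
  have hHolder := integral_mul_le_Lp_mul_Lq_of_nonneg hpq
    (ae_restrict_of_forall_mem measurableSet_Ioc fun s hs => rpow_nonneg (sub_nonneg.2 hs.2) r)
    (ae_restrict_of_forall_mem measurableSet_Ioc hv_nonneg) (memLp_sub_rpow hpq.pos hr) hv
  rwa [hker, ← intervalIntegral.integral_of_le ht, ← intervalIntegral.integral_of_le ht] at hHolder

theorem integral_sub_rpow_sub_one_mul_le {η t : ℝ} {v : ℝ → ℝ} (hη₀ : 0 < η) (hη₁ : η < 1)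
    (ht : 0 ≤ t) (hv_nonneg : ∀ s ∈ Icc 0 t, 0 ≤ v s)
    (hv : MemLp v (ENNReal.ofReal (2 / η)) (volume.restrict (Ioc 0 t))) :
    ∫ s in 0..t, (t - s) ^ (η - 1) * v s ≤
      2 / η * t ^ (η / 2) * (∫ s in 0..t, v s ^ (2 / η)) ^ (η / 2) := by
  have h2η : 0 < 2 - η := by linarith
  have hpq : (2 / (2 - η)).HolderConjugate (2 / η) := by
    rw [Real.holderConjugate_iff, one_lt_div h2η]
    exact ⟨by linarith, by field_simp; ring⟩
  have hexp : (η - 1) * (2 / (2 - η)) + 1 = η / (2 - η) := by field_simp; ring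
  have hr : -1 < (η - 1) * (2 / (2 - η)) := by
    have : 0 < η / (2 - η) := by positivity
    linarith
  have hHolder := integral_sub_rpow_mul_le hpq hr ht
    (fun s hs => hv_nonneg s (Ioc_subset_Icc_self hs)) hv
  rw [hexp, one_div_div, one_div_div] at hHolder
  refine hHolder.trans (mul_le_mul_of_nonneg_right ?_ (rpow_nonneg
    (intervalIntegral.integral_nonneg ht fun s hs => rpow_nonneg (hv_nonneg s hs) _) _))
  have ht_pow : (t ^ (η / (2 - η))) ^ ((2 - η) / 2) = t ^ (η / 2) := by
    rw [← rpow_mul ht]; congr 1; field_simp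
  have hconst : ((2 - η) / η) ^ ((2 - η) / 2) ≤ 2 / η := calc
    ((2 - η) / η) ^ ((2 - η) / 2) ≤ ((2 - η) / η) ^ (1 : ℝ) := by
      apply rpow_le_rpow_of_exponent_le
      · rw [le_div_iff₀ hη₀]; linarith
      · linarith
    _ ≤ 2 / η := by rw [rpow_one]; gcongr; linarith
  rw [div_div_eq_mul_div, mul_div_assoc, mul_rpow (rpow_nonneg ht _) (by positivity), ht_pow,
    mul_comm (2 / η)]
  gcongr

theorem Real.add_rpow_le_two_rpow_mul_rpow_add_rpow {p x y : ℝ} (hx : 0 ≤ x) (hy : 0 ≤ y)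
    (hp : 0 ≤ p) :
    (x + y) ^ p ≤ 2 ^ p * (x ^ p + y ^ p) := calc
  (x + y) ^ p ≤ (2 * max x y) ^ p := by
    gcongr
    rw [two_mul]; gcongr <;> simp
  _ = 2 ^ p * max x y ^ p := Real.mul_rpow zero_le_two (hx.trans (le_max_left x y))
  _ ≤ 2 ^ p * (x ^ p + y ^ p) := by
    gcongr
    rcases max_choice x y with h | h <;> rw [h] <;> simp [Real.rpow_nonneg, hx, hy]

theorem rpow_le_of_le_add_mul_rpow_one_div {x w D V p : ℝ} (hp : 0 < p) (hx : 0 ≤ x)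
    (hw : 0 ≤ w) (hD : 0 ≤ D) (hV : 0 ≤ V) (h : x ≤ w + D * V ^ (1 / p)) :
    x ^ p ≤ 2 ^ p * w ^ p + 2 ^ p * D ^ p * V := calc
  x ^ p ≤ (w + D * V ^ (1 / p)) ^ p := by gcongr
  _ ≤ 2 ^ p * (w ^ p + (D * V ^ (1 / p)) ^ p) :=
      add_rpow_le_two_rpow_mul_rpow_add_rpow hw (mul_nonneg hD (rpow_nonneg hV _)) hp.le
  _ = 2 ^ p * w ^ p + 2 ^ p * D ^ p * V := by
      rw [mul_rpow hD (rpow_nonneg hV _), ← rpow_mul hV, one_div_mul_cancel hp.ne', rpow_one]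
      ring

theorem integral_rpow_le_of_le_add_mul_integral_rpow {v ω : ℝ → ℝ} {p D t₀ : ℝ} (hp : 0 < p)
    (hD : 0 ≤ D) (ht₀ : 0 ≤ t₀) (hv_nonneg : ∀ t ∈ Icc 0 t₀, 0 ≤ v t)
    (hω_nonneg : ∀ t ∈ Icc 0 t₀, 0 ≤ ω t) (hv : IntegrableOn (fun s => v s ^ p) (Icc 0 t₀))
    (hω : IntegrableOn (fun s => ω s ^ p) (Icc 0 t₀))
    (h : ∀ t ∈ Icc 0 t₀, v t ≤ ω t + D * (∫ s in 0..t, v s ^ p) ^ (1 / p)) :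
    ∫ s in 0..t₀, v s ^ p ≤ 2 ^ p * (∫ s in 0..t₀, ω s ^ p) * exp (2 ^ p * D ^ p * t₀) := by
  set V : ℝ → ℝ := fun t => ∫ s in 0..t, v s ^ p
  have hsub : ∀ t ∈ Icc 0 t₀, uIcc 0 t ⊆ Icc 0 t₀ := fun t ht => by
    rw [uIcc_of_le ht.1]; exact Icc_subset_Icc_right ht.2
  have hV_nonneg : ∀ t ∈ Icc 0 t₀, 0 ≤ V t := fun t ht =>
    intervalIntegral.integral_nonneg ht.1 fun s hs =>
      rpow_nonneg (hv_nonneg s ⟨hs.1, hs.2.trans ht.2⟩) p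
  have hV_cont : ContinuousOn V (Icc 0 t₀) := by
    simpa only [uIcc_of_le ht₀] using
      intervalIntegral.continuousOn_primitive_interval (hv.mono_set (hsub t₀ ⟨ht₀, le_rfl⟩))
  have hpow : ∀ t ∈ Icc 0 t₀, v t ^ p ≤ 2 ^ p * ω t ^ p + 2 ^ p * D ^ p * V t := fun t ht =>
    rpow_le_of_le_add_mul_rpow_one_div hp (hv_nonneg t ht) (hω_nonneg t ht) hD (hV_nonneg t ht)
      (h t ht)
  have hVineq : ∀ t ∈ Icc 0 t₀,
      V t ≤ 2 ^ p * (∫ s in 0..t₀, ω s ^ p) + 2 ^ p * D ^ p * ∫ s in 0..t, V s := by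
    intro t ht
    have hωt : IntervalIntegrable (fun s => ω s ^ p) volume 0 t :=
      (hω.mono_set (hsub t ht)).intervalIntegrable
    have hVt : IntervalIntegrable V volume 0 t :=
      (hV_cont.mono (hsub t ht)).intervalIntegrable
    have hω_mono : ∫ s in 0..t, ω s ^ p ≤ ∫ s in 0..t₀, ω s ^ p :=
      intervalIntegral.integral_mono_interval le_rfl ht.1 ht.2
        (ae_restrict_of_forall_mem measurableSet_Ioc fun s hs =>
          rpow_nonneg (hω_nonneg s (Ioc_subset_Icc_self hs)) p)
        (hω.mono_set (hsub t₀ ⟨ht₀, le_rfl⟩)).intervalIntegrable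
    calc V t ≤ ∫ s in 0..t, (2 ^ p * ω s ^ p + 2 ^ p * D ^ p * V s) :=
          intervalIntegral.integral_mono_on ht.1 (hv.mono_set (hsub t ht)).intervalIntegrable
            ((hωt.const_mul _).add (hVt.const_mul _))
            fun s hs => hpow s ⟨hs.1, hs.2.trans ht.2⟩
      _ = 2 ^ p * (∫ s in 0..t, ω s ^ p) + 2 ^ p * D ^ p * ∫ s in 0..t, V s := by
          rw [intervalIntegral.integral_add (hωt.const_mul _) (hVt.const_mul _),
            intervalIntegral.integral_const_mul, intervalIntegral.integral_const_mul]
      _ ≤ 2 ^ p * (∫ s in 0..t₀, ω s ^ p) + 2 ^ p * D ^ p * ∫ s in 0..t, V s := by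
          gcongr
  simpa using le_mul_exp_of_le_add_mul_integral (by positivity) hV_cont hVineq t₀ ⟨ht₀, le_rfl⟩

theorem le_add_mul_exp_of_le_add_mul_integral_rpow {v ω : ℝ → ℝ} {p D t₀ : ℝ} (hp : 0 < p)
    (hD : 0 ≤ D) (ht₀ : 0 ≤ t₀) (hv_nonneg : ∀ t ∈ Icc 0 t₀, 0 ≤ v t)
    (hω_nonneg : ∀ t ∈ Icc 0 t₀, 0 ≤ ω t) (hv : IntegrableOn (fun s => v s ^ p) (Icc 0 t₀))
    (hω : IntegrableOn (fun s => ω s ^ p) (Icc 0 t₀))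
    (h : ∀ t ∈ Icc 0 t₀, v t ≤ ω t + D * (∫ s in 0..t, v s ^ p) ^ (1 / p)) :
    v t₀ ≤ ω t₀ + 2 * D * exp (2 ^ p * D ^ p * t₀ / p) * (∫ s in 0..t₀, ω s ^ p) ^ (1 / p) := by
  have hV := integral_rpow_le_of_le_add_mul_integral_rpow hp hD ht₀ hv_nonneg hω_nonneg hv hω h
  have hW : 0 ≤ ∫ s in 0..t₀, ω s ^ p :=
    intervalIntegral.integral_nonneg ht₀ fun s hs => rpow_nonneg (hω_nonneg s hs) p
  have hV_nonneg : 0 ≤ ∫ s in 0..t₀, v s ^ p :=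
    intervalIntegral.integral_nonneg ht₀ fun s hs => rpow_nonneg (hv_nonneg s hs) p
  calc v t₀ ≤ ω t₀ + D * (∫ s in 0..t₀, v s ^ p) ^ (1 / p) := h t₀ ⟨ht₀, le_rfl⟩
    _ ≤ ω t₀ + D * (2 ^ p * (∫ s in 0..t₀, ω s ^ p) * exp (2 ^ p * D ^ p * t₀)) ^ (1 / p) := by
        gcongr
    _ = _ := by
        rw [mul_rpow (by positivity) (exp_pos _).le, mul_rpow (by positivity) hW, ← exp_mul,
          ← rpow_mul zero_le_two, mul_one_div_cancel hp.ne', rpow_one, mul_one_div]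
        ring

theorem le_add_mul_integral_rpow_of_le_add_mul_integral_sub_rpow {ω v : ℝ → ℝ} {a η t₀ : ℝ}
    (ha : 0 ≤ a) (hη₀ : 0 < η) (hη₁ : η < 1) (hv_nonneg : ∀ t ∈ Icc 0 t₀, 0 ≤ v t)
    (hv : MemLp v (ENNReal.ofReal (2 / η)) (volume.restrict (Icc 0 t₀)))
    (h : ∀ t ∈ Icc 0 t₀, v t ≤ ω t + a * ∫ s in 0..t, (t - s) ^ (η - 1) * v s) :
    ∀ t ∈ Icc 0 t₀, v t ≤
      ω t + 2 * a / η * t₀ ^ (η / 2) * (∫ s in 0..t, v s ^ (2 / η)) ^ (1 / (2 / η)) := by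
  intro t ht
  have hv_nonneg' : ∀ s ∈ Icc 0 t, 0 ≤ v s := fun s hs => hv_nonneg s ⟨hs.1, hs.2.trans ht.2⟩
  have hV : 0 ≤ (∫ s in 0..t, v s ^ (2 / η)) ^ (η / 2) := rpow_nonneg
    (intervalIntegral.integral_nonneg ht.1 fun s hs => rpow_nonneg (hv_nonneg' s hs) _) _
  have hHolder := integral_sub_rpow_sub_one_mul_le hη₀ hη₁ ht.1 hv_nonneg'
    (hv.mono_measure (Measure.restrict_mono
      (Ioc_subset_Icc_self.trans (Icc_subset_Icc_right ht.2)) le_rfl))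
  rw [one_div_div]
  calc v t ≤ ω t + a * ∫ s in 0..t, (t - s) ^ (η - 1) * v s := h t ht
    _ ≤ ω t + a * (2 / η * t ^ (η / 2) * (∫ s in 0..t, v s ^ (2 / η)) ^ (η / 2)) := by gcongr
    _ = ω t + 2 * a / η * t ^ (η / 2) * (∫ s in 0..t, v s ^ (2 / η)) ^ (η / 2) := by ring
    _ ≤ ω t + 2 * a / η * t₀ ^ (η / 2) * (∫ s in 0..t, v s ^ (2 / η)) ^ (η / 2) := by
        have := ht.1
        gcongr
        exact ht.2

theorem le_add_mul_exp_of_le_add_mul_integral_sub_rpow {ω v : ℝ → ℝ} {a η t₀ : ℝ} (ha : 0 ≤ a)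
    (hη₀ : 0 < η) (hη₁ : η < 1) (ht₀ : 0 ≤ t₀) (hv_nonneg : ∀ t ∈ Icc 0 t₀, 0 ≤ v t)
    (hω_nonneg : ∀ t ∈ Icc 0 t₀, 0 ≤ ω t)
    (hv : MemLp v (ENNReal.ofReal (2 / η)) (volume.restrict (Icc 0 t₀)))
    (hω : IntegrableOn (fun s => ω s ^ (2 / η)) (Icc 0 t₀))
    (h : ∀ t ∈ Icc 0 t₀, v t ≤ ω t + a * ∫ s in 0..t, (t - s) ^ (η - 1) * v s) :
    v t₀ ≤ ω t₀ + 4 * a * t₀ ^ (η / 2) / η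
      * exp (η / 2 * ((4 : ℝ) ^ (2 / η) * a ^ (2 / η) * t₀ ^ 2 / η ^ (2 / η)))
      * (∫ s in 0..t₀, ω s ^ (2 / η)) ^ (η / 2) := by
  have hbound := le_add_mul_exp_of_le_add_mul_integral_rpow (by positivity) (by positivity) ht₀
    hv_nonneg hω_nonneg
    (hv.integrable_rpow_of_nonneg (by positivity)
      (ae_restrict_of_forall_mem measurableSet_Icc hv_nonneg)) hω
    (le_add_mul_integral_rpow_of_le_add_mul_integral_sub_rpow ha hη₀ hη₁ hv_nonneg hv h)
  have hX : 2 ^ (2 / η) * (2 * a / η * t₀ ^ (η / 2)) ^ (2 / η) * t₀ =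
      (4 : ℝ) ^ (2 / η) * a ^ (2 / η) * t₀ ^ 2 / η ^ (2 / η) := by
    rw [mul_rpow (by positivity) (by positivity), ← rpow_mul ht₀, div_mul_div_cancel₀ two_ne_zero,
      div_self hη₀.ne', rpow_one, div_rpow (by positivity) hη₀.le, mul_rpow zero_le_two ha,
      show (4 : ℝ) = 2 * 2 by norm_num, mul_rpow zero_le_two zero_le_two]
    ring
  rw [hX, one_div_div] at hbound
  refine hbound.trans_eq ?_
  rw [div_eq_mul_inv _ (2 / η), inv_div, mul_comm _ (η / 2)]
  ring

theorem singular_gronwall_general (T a η : ℝ) (ha : 0 < a) (hη₁ : 0 < η) (hη₂ : η < 1)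
    (ω v : ℝ → ℝ)
    (hω_cont : ContinuousOn ω (Set.Icc 0 T))
    (hω_nonneg : ∀ t ∈ Set.Icc (0 : ℝ) T, 0 ≤ ω t)
    (hv_meas : Measurable v)
    (hv_bdd : ∃ M : ℝ, ∀ t ∈ Set.Icc (0 : ℝ) T, v t ≤ M)
    (hv_nonneg : ∀ t ∈ Set.Icc (0 : ℝ) T, 0 ≤ v t)
    (hineq : ∀ t ∈ Set.Icc (0 : ℝ) T,
      v t ≤ ω t + a * ∫ s in (0 : ℝ)..t, (t - s) ^ (η - 1) * v s) :
    ∀ t ∈ Set.Icc (0 : ℝ) T,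
      v t ≤ 2 * ω t
        + (8 * a * t ^ (η / 2) / η)
          * Real.exp ((4 : ℝ) ^ (2 / η) * a ^ (2 / η) * t ^ 2 / η ^ (2 / η))
          * (∫ s in (0 : ℝ)..t, ω s ^ (2 / η)) ^ (η / 2) := by
  obtain ⟨M, hM⟩ := hv_bdd
  intro t₀ ht₀
  have ht₀0 := ht₀.1
  have hsub : Icc 0 t₀ ⊆ Icc 0 T := Icc_subset_Icc_right ht₀.2
  have hv_nonneg₀ : ∀ t ∈ Icc 0 t₀, 0 ≤ v t := fun t ht => hv_nonneg t (hsub ht)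
  have hv_memLp : MemLp v (ENNReal.ofReal (2 / η)) (volume.restrict (Icc 0 t₀)) :=
    memLp_of_bounded (ae_restrict_of_forall_mem measurableSet_Icc fun t ht =>
      ⟨hv_nonneg₀ t ht, hM t (hsub ht)⟩) hv_meas.aestronglyMeasurable _
  have hbound := le_add_mul_exp_of_le_add_mul_integral_sub_rpow ha.le hη₁ hη₂ ht₀0 hv_nonneg₀
    (fun t ht => hω_nonneg t (hsub ht)) hv_memLp
    ((hω_cont.rpow_const fun t _ => Or.inr (by positivity)).integrableOn_Icc.mono_set hsub)
    (fun t ht => hineq t (hsub ht))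
  have hω₀ := hω_nonneg t₀ ht₀
  have hW : 0 ≤ (∫ s in 0..t₀, ω s ^ (2 / η)) ^ (η / 2) := rpow_nonneg
    (intervalIntegral.integral_nonneg ht₀0 fun s hs => rpow_nonneg (hω_nonneg s (hsub hs)) _) _
  refine hbound.trans ?_
  gcongr ?_ + ?_ * exp ?_ * _
  · linarith
  · gcongr
    norm_num
  · exact mul_le_of_le_one_left (by positivity) (by linarith)

/-- Gronwall-type lemma for the singular kernel `(t−s)^(η−1)`: if
`v(t) ≤ ω(t) + a ∫₀ᵗ (t−s)^(η−1) v(s) ds` on `[0,T]`, then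
`v(t) ≤ 2ω(t) + (8 a t^(η/2)/η) exp(4^(2/η) a^(2/η) t²/η^(2/η)) (∫₀ᵗ ω(s)^(2/η) ds)^(η/2)`. -/
theorem singular_gronwall (T a η : ℝ) (hT : 0 < T) (ha : 0 < a) (hη₁ : 0 < η) (hη₂ : η < 1)
    (ω v : ℝ → ℝ)
    (hω_cont : ContinuousOn ω (Set.Icc 0 T))
    (hω_nonneg : ∀ t ∈ Set.Icc (0 : ℝ) T, 0 ≤ ω t)
    (hv_meas : Measurable v)
    (hv_bdd : ∃ M : ℝ, ∀ t ∈ Set.Icc (0 : ℝ) T, v t ≤ M)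
    (hv_nonneg : ∀ t ∈ Set.Icc (0 : ℝ) T, 0 ≤ v t)
    (hineq : ∀ t ∈ Set.Icc (0 : ℝ) T,
      v t ≤ ω t + a * ∫ s in (0 : ℝ)..t, (t - s) ^ (η - 1) * v s) :
    ∀ t ∈ Set.Icc (0 : ℝ) T,
      v t ≤ 2 * ω t
        + (8 * a * t ^ (η / 2) / η)
          * Real.exp ((4 : ℝ) ^ (2 / η) * a ^ (2 / η) * t ^ 2 / η ^ (2 / η))
          * (∫ s in (0 : ℝ)..t, ω s ^ (2 / η)) ^ (η / 2) :=
  singular_gronwall_general T a η ha hη₁ hη₂ ω v hω_cont hω_nonneg hv_meas hv_bdd hv_nonneg hineq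
end

section
/- Let T > 0, let a > 0 and 0 < η < 1, let ω : [0,T] → [0,∞) be continuous and non-decreasing, and let v : [0,T] → [0,∞) be a bounded measurable function satisfying v(t) ≤ ω(t) + a ∫₀ᵗ (t−s)^{η−1} v(s) ds for all t ∈ [0,T]. Then for all t ∈ [0,T], v(t) ≤ 2ω(t) · exp(4^{2/η} a^{2/η} t² / η^{2/η}). -/
/-!
Let `S t = sup_{[0,t]} v`. Split the kernel integral at distance `ε` from the singularity. Near the
singularity the kernel has mass `ε^η/η`, so that part contributes at most `a ε^η/η · S t = S t / 2`
once `ε^η = η/(2a)`; away from it the kernel is at most `ε^(η-1)`. Taking suprema gives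
`S t ≤ 2 ω t + 2 a ε^(η-1) ∫₀ᵗ S`, and the classical Gronwall inequality gives
`S t ≤ 2 ω t exp(2 a ε^(η-1) t)`, whose exponent is at most `4^(2/η) a^(2/η) t² / η^(2/η)` when
`t ≥ ε`. When `t ≤ ε` the part away from the singularity is empty and `S t ≤ 2 ω t` directly.
-/

open MeasureTheory Set Real
open scoped Nat

section Gronwall

variable {u w : ℝ → ℝ} {A C M t : ℝ}

theorem mul_integral_pow_div_factorial (C s : ℝ) (n : ℕ) :
    C * ∫ r in (0 : ℝ)..s, (C * r) ^ n / n ! = (C * s) ^ (n + 1) / (n + 1)! := by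
  simp only [mul_pow, intervalIntegral.integral_div, intervalIntegral.integral_const_mul,
    integral_pow]
  push_cast [Nat.factorial_succ]
  field_simp
  ring

theorem le_mul_pow_div_factorial_of_le_mul_integral (hC : 0 ≤ C)
    (hw_int : IntervalIntegrable w volume 0 t) (hM : ∀ s ∈ Icc 0 t, w s ≤ M)
    (h : ∀ s ∈ Icc 0 t, w s ≤ C * ∫ r in (0 : ℝ)..s, w r) (n : ℕ) :
    ∀ s ∈ Icc 0 t, w s ≤ M * ((C * s) ^ n / n !) := by
  induction n with
  | zero => simpa using hM
  | succ n ih =>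
    intro s hs
    calc w s ≤ C * ∫ r in (0 : ℝ)..s, w r := h s hs
      _ ≤ C * ∫ r in (0 : ℝ)..s, M * ((C * r) ^ n / n !) := by
        gcongr
        exact intervalIntegral.integral_mono_on hs.1
          (hw_int.mono_set (uIcc_subset_uIcc_left (Icc_subset_uIcc hs)))
          (Continuous.intervalIntegrable (by fun_prop) _ _) fun r hr => ih r ⟨hr.1, hr.2.trans hs.2⟩
      _ = M * ((C * s) ^ (n + 1) / (n + 1)!) := by
        rw [intervalIntegral.integral_const_mul, mul_left_comm, mul_integral_pow_div_factorial]

theorem nonpos_of_le_mul_integral (hC : 0 ≤ C) (hw_int : IntervalIntegrable w volume 0 t)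
    (hw_bdd : BddAbove (w '' Icc 0 t)) (h : ∀ s ∈ Icc 0 t, w s ≤ C * ∫ r in (0 : ℝ)..s, w r) :
    ∀ s ∈ Icc 0 t, w s ≤ 0 := by
  obtain ⟨M, hM⟩ := hw_bdd
  intro s hs
  have hlim := (FloorSemiring.tendsto_pow_div_factorial_atTop (C * s)).const_mul M
  rw [mul_zero] at hlim
  exact ge_of_tendsto' hlim fun n =>
    le_mul_pow_div_factorial_of_le_mul_integral hC hw_int (fun r hr => hM ⟨r, hr, rfl⟩) h n s hs

theorem mul_integral_exp_mul (C s : ℝ) : C * ∫ r in (0 : ℝ)..s, exp (C * r) = exp (C * s) - 1 := by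
  have hderiv (r : ℝ) : HasDerivAt (fun r => exp (C * r)) (C * exp (C * r)) r := by
    simpa [mul_comm] using ((hasDerivAt_id r).const_mul C).exp
  rw [← intervalIntegral.integral_const_mul,
    intervalIntegral.integral_eq_sub_of_hasDerivAt (fun r _ => hderiv r)
      (Continuous.intervalIntegrable (by fun_prop) _ _), mul_zero, exp_zero]

theorem le_mul_exp_of_le_add_mul_integral_s12 (hA : 0 ≤ A) (hC : 0 ≤ C)
    (hu_int : IntervalIntegrable u volume 0 t) (hu_bdd : BddAbove (u '' Icc 0 t))
    (h : ∀ s ∈ Icc 0 t, u s ≤ A + C * ∫ r in (0 : ℝ)..s, u r) :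
    ∀ s ∈ Icc 0 t, u s ≤ A * exp (C * s) := by
  have hexp_int : IntervalIntegrable (fun r => A * exp (C * r)) volume 0 t :=
    Continuous.intervalIntegrable (by fun_prop) _ _
  -- `A exp (C s)` satisfies the inequality with equality, so the difference satisfies the
  -- homogeneous one.
  have hw := nonpos_of_le_mul_integral (w := fun s => u s - A * exp (C * s)) hC
    (hu_int.sub hexp_int) ?_ ?_
  · exact fun s hs => sub_nonpos.1 (hw s hs)
  · obtain ⟨M, hM⟩ := hu_bdd
    refine ⟨M, forall_mem_image.2 fun s hs => ?_⟩
    linarith [hM (mem_image_of_mem u hs), mul_nonneg hA (exp_pos (C * s)).le]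
  · intro s hs
    have hsub : uIcc 0 s ⊆ uIcc 0 t := uIcc_subset_uIcc_left (Icc_subset_uIcc hs)
    rw [intervalIntegral.integral_sub (hu_int.mono_set hsub) (hexp_int.mono_set hsub),
      intervalIntegral.integral_const_mul, mul_sub, mul_left_comm, mul_integral_exp_mul]
    linarith [h s hs]

end Gronwall

theorem intervalIntegral.integral_mono_on_of_nonneg {f g : ℝ → ℝ} {a b : ℝ} (hab : a ≤ b)
    (hg : IntervalIntegrable g volume a b) (hf : ∀ x ∈ Ioc a b, 0 ≤ f x)
    (hfg : ∀ x ∈ Ioc a b, f x ≤ g x) : ∫ x in a..b, f x ≤ ∫ x in a..b, g x := by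
  rw [intervalIntegral.integral_of_le hab, intervalIntegral.integral_of_le hab]
  exact integral_mono_of_nonneg (ae_restrict_of_forall_mem measurableSet_Ioc hf) hg.1
    (ae_restrict_of_forall_mem measurableSet_Ioc hfg)

section Kernel

variable {η τ B ε b c : ℝ} {v g : ℝ → ℝ}

theorem intervalIntegrable_sub_rpow {r : ℝ} (hr : -1 < r) (τ c d : ℝ) :
    IntervalIntegrable (fun s => (τ - s) ^ r) volume c d := by
  simpa using
    (intervalIntegral.intervalIntegrable_rpow' hr (a := τ - c) (b := τ - d)).comp_sub_left τ

theorem integral_sub_rpow_sub_one (hη : 0 < η) (τ c : ℝ) :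
    ∫ s in c..τ, (τ - s) ^ (η - 1) = (τ - c) ^ η / η := by
  rw [intervalIntegral.integral_comp_sub_left (fun x => x ^ (η - 1)) τ, sub_self,
    integral_rpow (Or.inl (by linarith)), sub_add_cancel, zero_rpow hη.ne', sub_zero]

theorem intervalIntegrable_sub_rpow_mul {d M : ℝ} (hη : 0 < η) (hcd : c ≤ d)
    (hv : AEStronglyMeasurable v volume) (hv_bdd : ∀ s ∈ Ioc c d, ‖v s‖ ≤ M) :
    IntervalIntegrable (fun s => (τ - s) ^ (η - 1) * v s) volume c d := by
  rw [intervalIntegrable_iff_integrableOn_Ioc_of_le hcd]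
  have hker := intervalIntegrable_sub_rpow (by linarith : -1 < η - 1) τ c d
  rw [intervalIntegrable_iff_integrableOn_Ioc_of_le hcd] at hker
  exact hker.mul_bdd hv.restrict (ae_restrict_of_forall_mem measurableSet_Ioc hv_bdd)

theorem integral_sub_rpow_mul_le_s12 (hη : 0 < η) (hcτ : c ≤ τ) (hv_nonneg : ∀ s ∈ Ioc c τ, 0 ≤ v s)
    (hv : ∀ s ∈ Ioc c τ, v s ≤ B) :
    ∫ s in c..τ, (τ - s) ^ (η - 1) * v s ≤ B * ((τ - c) ^ η / η) := by
  have hker (s : ℝ) (hs : s ∈ Ioc c τ) : 0 ≤ (τ - s) ^ (η - 1) :=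
    rpow_nonneg (sub_nonneg.2 hs.2) _
  calc ∫ s in c..τ, (τ - s) ^ (η - 1) * v s ≤ ∫ s in c..τ, (τ - s) ^ (η - 1) * B :=
        intervalIntegral.integral_mono_on_of_nonneg hcτ
          ((intervalIntegrable_sub_rpow (by linarith) τ c τ).mul_const B)
          (fun s hs => mul_nonneg (hker s hs) (hv_nonneg s hs))
          (fun s hs => mul_le_mul_of_nonneg_left (hv s hs) (hker s hs))
    _ = B * ((τ - c) ^ η / η) := by
      rw [intervalIntegral.integral_mul_const, integral_sub_rpow_sub_one hη, mul_comm]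

theorem integral_sub_rpow_mul_le_rpow_mul_integral (hη : η ≤ 1) (hε : 0 < ε) (hbc : b ≤ c)
    (hcτ : c ≤ τ - ε) (hg : IntervalIntegrable g volume b c) (hv_nonneg : ∀ s ∈ Ioc b c, 0 ≤ v s)
    (hv : ∀ s ∈ Ioc b c, v s ≤ g s) :
    ∫ s in b..c, (τ - s) ^ (η - 1) * v s ≤ ε ^ (η - 1) * ∫ s in b..c, g s := by
  rw [← intervalIntegral.integral_const_mul]
  refine intervalIntegral.integral_mono_on_of_nonneg hbc (hg.const_mul _)
    (fun s hs => mul_nonneg (rpow_nonneg (by linarith [hs.2]) _) (hv_nonneg s hs))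
    (fun s hs => mul_le_mul (rpow_le_rpow_of_nonpos hε (by linarith [hs.2]) (by linarith))
      (hv s hs) (hv_nonneg s hs) (rpow_nonneg hε.le _))

end Kernel

noncomputable def runningSup (v : ℝ → ℝ) (t : ℝ) : ℝ := sSup (v '' Icc 0 t)

section RunningSup

variable {v : ℝ → ℝ} {T t s B : ℝ}

theorem le_runningSup (hv : BddAbove (v '' Icc 0 T)) (htT : t ≤ T) (hs : s ∈ Icc 0 t) :
    v s ≤ runningSup v t :=
  le_csSup (hv.mono (image_mono (Icc_subset_Icc_right htT))) (mem_image_of_mem v hs)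

theorem runningSup_le (ht : 0 ≤ t) (h : ∀ s ∈ Icc 0 t, v s ≤ B) : runningSup v t ≤ B :=
  csSup_le ((nonempty_Icc.2 ht).image v) (forall_mem_image.2 h)

theorem monotoneOn_runningSup (hv : BddAbove (v '' Icc 0 T)) :
    MonotoneOn (runningSup v) (Icc 0 T) :=
  fun _ ht _ ht' htt' =>
    runningSup_le ht.1 fun _ hs => le_runningSup hv ht'.2 ⟨hs.1, hs.2.trans htt'⟩

theorem runningSup_nonneg (hv : BddAbove (v '' Icc 0 T)) (hv0 : 0 ≤ v 0) (ht : t ∈ Icc 0 T) :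
    0 ≤ runningSup v t :=
  hv0.trans (le_runningSup hv ht.2 ⟨le_rfl, ht.1⟩)

theorem intervalIntegrable_runningSup (hv : BddAbove (v '' Icc 0 T)) (ht : t ∈ Icc 0 T) :
    IntervalIntegrable (runningSup v) volume 0 t :=
  ((monotoneOn_runningSup hv).mono (by
    rw [uIcc_of_le ht.1]; exact Icc_subset_Icc_right ht.2)).intervalIntegrable

end RunningSup

section SingularVolterra

variable {T a η ε τ t : ℝ} {ω v : ℝ → ℝ}

theorem integral_sub_rpow_mul_le_runningSup (hη₁ : 0 < η) (hη₂ : η ≤ 1) (hε : 0 < ε)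
    (hv_meas : Measurable v) (hv_bdd : BddAbove (v '' Icc 0 T))
    (hv_nonneg : ∀ s ∈ Icc 0 T, 0 ≤ v s) (hτ : τ ∈ Icc 0 T) :
    ∫ s in (0 : ℝ)..τ, (τ - s) ^ (η - 1) * v s ≤
      ε ^ (η - 1) * (∫ s in (0 : ℝ)..τ, runningSup v s) + runningSup v τ * (ε ^ η / η) := by
  have hS_nonneg (s : ℝ) (hs : s ∈ Icc 0 τ) : 0 ≤ runningSup v s :=
    runningSup_nonneg hv_bdd (hv_nonneg 0 ⟨le_rfl, hτ.1.trans hτ.2⟩) ⟨hs.1, hs.2.trans hτ.2⟩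
  have hS_int := intervalIntegrable_runningSup hv_bdd hτ
  have hv_nonneg' (s : ℝ) (hs : s ∈ Ioc 0 τ) : 0 ≤ v s := hv_nonneg s ⟨hs.1.le, hs.2.trans hτ.2⟩
  have hv_le (s : ℝ) (hs : s ∈ Ioc 0 τ) : v s ≤ runningSup v τ :=
    le_runningSup hv_bdd hτ.2 (Ioc_subset_Icc_self hs)
  rcases le_or_gt τ ε with hτε | hετ
  · calc ∫ s in (0 : ℝ)..τ, (τ - s) ^ (η - 1) * v s ≤ runningSup v τ * ((τ - 0) ^ η / η) :=
          integral_sub_rpow_mul_le_s12 hη₁ hτ.1 hv_nonneg' hv_le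
      _ ≤ runningSup v τ * (ε ^ η / η) := by
          rw [sub_zero]
          gcongr
          exacts [hS_nonneg τ ⟨hτ.1, le_rfl⟩, hτ.1]
      _ ≤ ε ^ (η - 1) * (∫ s in (0 : ℝ)..τ, runningSup v s) + runningSup v τ * (ε ^ η / η) :=
          le_add_of_nonneg_left (mul_nonneg (rpow_nonneg hε.le _)
            (intervalIntegral.integral_nonneg hτ.1 hS_nonneg))
  · have hkv : IntervalIntegrable (fun s => (τ - s) ^ (η - 1) * v s) volume 0 τ :=
      intervalIntegrable_sub_rpow_mul hη₁ hτ.1 hv_meas.aestronglyMeasurable fun s hs => by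
        rw [Real.norm_of_nonneg (hv_nonneg' s hs)]; exact hv_le s hs
    have hmid : τ - ε ∈ uIcc 0 τ := Icc_subset_uIcc ⟨by linarith, by linarith⟩
    rw [← intervalIntegral.integral_add_adjacent_intervals
      (hkv.mono_set (uIcc_subset_uIcc_left hmid))
      (hkv.mono_set (uIcc_subset_uIcc hmid right_mem_uIcc))]
    apply add_le_add
    · calc ∫ s in (0 : ℝ)..τ - ε, (τ - s) ^ (η - 1) * v s ≤
            ε ^ (η - 1) * ∫ s in (0 : ℝ)..τ - ε, runningSup v s :=
          integral_sub_rpow_mul_le_rpow_mul_integral hη₂ hε (sub_nonneg.2 hετ.le) le_rfl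
            (hS_int.mono_set (uIcc_subset_uIcc_left hmid))
            (fun s hs => hv_nonneg' s ⟨hs.1, by linarith [hs.2]⟩)
            (fun s hs => le_runningSup hv_bdd (by linarith [hs.2, hτ.2]) ⟨hs.1.le, le_rfl⟩)
        _ ≤ ε ^ (η - 1) * ∫ s in (0 : ℝ)..τ, runningSup v s := by
          gcongr
          exact intervalIntegral.integral_mono_interval le_rfl (sub_nonneg.2 hετ.le)
            (by linarith) (ae_restrict_of_forall_mem measurableSet_Ioc fun s hs =>
              hS_nonneg s (Ioc_subset_Icc_self hs)) hS_int
    · simpa only [sub_sub_cancel] using integral_sub_rpow_mul_le_s12 hη₁ (sub_le_self τ hε.le)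
        (fun s hs => hv_nonneg' s ⟨by linarith [hs.1], hs.2⟩)
        (fun s hs => hv_le s ⟨by linarith [hs.1], hs.2⟩)

theorem runningSup_le_of_le_add_integral (ha : 0 ≤ a) (hη₁ : 0 < η) (hη₂ : η ≤ 1) (hε : 0 < ε)
    (hω_mono : MonotoneOn ω (Icc 0 T)) (hv_meas : Measurable v)
    (hv_bdd : BddAbove (v '' Icc 0 T)) (hv_nonneg : ∀ s ∈ Icc 0 T, 0 ≤ v s)
    (hineq : ∀ s ∈ Icc 0 T, v s ≤ ω s + a * ∫ r in (0 : ℝ)..s, (s - r) ^ (η - 1) * v r)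
    (ht : t ∈ Icc 0 T) :
    runningSup v t ≤ ω t + a * (ε ^ (η - 1) * (∫ s in (0 : ℝ)..t, runningSup v s) +
      runningSup v t * (ε ^ η / η)) := by
  refine runningSup_le ht.1 fun τ hτ => ?_
  have hτT : τ ∈ Icc 0 T := ⟨hτ.1, hτ.2.trans ht.2⟩
  calc v τ ≤ ω τ + a * ∫ r in (0 : ℝ)..τ, (τ - r) ^ (η - 1) * v r := hineq τ hτT
    _ ≤ ω t + a * (ε ^ (η - 1) * (∫ s in (0 : ℝ)..τ, runningSup v s) +
        runningSup v τ * (ε ^ η / η)) := by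
      gcongr
      · exact hω_mono hτT ht hτ.2
      · exact integral_sub_rpow_mul_le_runningSup hη₁ hη₂ hε hv_meas hv_bdd hv_nonneg hτT
    _ ≤ _ := by
      gcongr
      · exact intervalIntegral.integral_mono_interval le_rfl hτ.1 hτ.2
          (ae_restrict_of_forall_mem measurableSet_Ioc fun s hs =>
            runningSup_nonneg hv_bdd (hv_nonneg 0 ⟨le_rfl, ht.1.trans ht.2⟩)
              ⟨hs.1.le, hs.2.trans ht.2⟩) (intervalIntegrable_runningSup hv_bdd ht)
      · exact monotoneOn_runningSup hv_bdd hτT ht hτ.2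

theorem runningSup_le_two_mul_mul_exp (ha : 0 ≤ a) (hη₁ : 0 < η) (hη₂ : η ≤ 1) (hε : 0 < ε)
    (hεη : a * (ε ^ η / η) = 1 / 2) (hω_mono : MonotoneOn ω (Icc 0 T))
    (hω_nonneg : ∀ s ∈ Icc 0 T, 0 ≤ ω s) (hv_meas : Measurable v)
    (hv_bdd : BddAbove (v '' Icc 0 T)) (hv_nonneg : ∀ s ∈ Icc 0 T, 0 ≤ v s)
    (hineq : ∀ s ∈ Icc 0 T, v s ≤ ω s + a * ∫ r in (0 : ℝ)..s, (s - r) ^ (η - 1) * v r)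
    (ht : t ∈ Icc 0 T) :
    runningSup v t ≤ 2 * ω t * exp (2 * a * ε ^ (η - 1) * t) := by
  have hkey (s : ℝ) (hs : s ∈ Icc 0 t) :
      runningSup v s ≤ 2 * ω t + 2 * a * ε ^ (η - 1) * ∫ r in (0 : ℝ)..s, runningSup v r := by
    have hsT : s ∈ Icc 0 T := ⟨hs.1, hs.2.trans ht.2⟩
    have hS := runningSup_le_of_le_add_integral ha hη₁ hη₂ hε hω_mono hv_meas hv_bdd
      hv_nonneg hineq hsT
    rw [mul_add, mul_left_comm a (runningSup v s), hεη] at hS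
    linarith [hω_mono hsT ht hs.2]
  have hS_bdd : BddAbove (runningSup v '' Icc 0 t) :=
    ⟨runningSup v t, forall_mem_image.2 fun s hs =>
      monotoneOn_runningSup hv_bdd ⟨hs.1, hs.2.trans ht.2⟩ ht hs.2⟩
  exact le_mul_exp_of_le_add_mul_integral_s12 (by linarith [hω_nonneg t ht]) (by positivity)
    (intervalIntegrable_runningSup hv_bdd ht) hS_bdd hkey t ⟨ht.1, le_rfl⟩

theorem runningSup_le_two_mul (ha : 0 ≤ a) (hη₁ : 0 < η) (hεη : a * (ε ^ η / η) = 1 / 2)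
    (hω_mono : MonotoneOn ω (Icc 0 T)) (hv_bdd : BddAbove (v '' Icc 0 T))
    (hv_nonneg : ∀ s ∈ Icc 0 T, 0 ≤ v s)
    (hineq : ∀ s ∈ Icc 0 T, v s ≤ ω s + a * ∫ r in (0 : ℝ)..s, (s - r) ^ (η - 1) * v r)
    (ht : t ∈ Icc 0 T) (htε : t ≤ ε) :
    runningSup v t ≤ 2 * ω t := by
  suffices runningSup v t ≤ ω t + a * (runningSup v t * (ε ^ η / η)) by
    rw [mul_left_comm, hεη] at this
    linarith
  refine runningSup_le ht.1 fun τ hτ => ?_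
  have hτT : τ ∈ Icc 0 T := ⟨hτ.1, hτ.2.trans ht.2⟩
  calc v τ ≤ ω τ + a * ∫ r in (0 : ℝ)..τ, (τ - r) ^ (η - 1) * v r := hineq τ hτT
    _ ≤ ω t + a * (runningSup v t * ((τ - 0) ^ η / η)) := by
      gcongr
      · exact hω_mono hτT ht hτ.2
      · exact integral_sub_rpow_mul_le_s12 hη₁ hτ.1
          (fun s hs => hv_nonneg s ⟨hs.1.le, hs.2.trans hτT.2⟩)
          (fun s hs => le_runningSup hv_bdd ht.2 ⟨hs.1.le, hs.2.trans hτ.2⟩)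
    _ ≤ ω t + a * (runningSup v t * (ε ^ η / η)) := by
      rw [sub_zero]
      gcongr
      exacts [(hv_nonneg τ hτT).trans (le_runningSup hv_bdd ht.2 hτ), hτ.1, hτ.2.trans htε]

end SingularVolterra

theorem two_mul_mul_rpow_mul_le {a η ε t : ℝ} (ha : 0 < a) (hη₁ : 0 < η) (hη₂ : η ≤ 1)
    (hε : 0 < ε) (hεη : ε ^ η = η / (2 * a)) (ht : ε ≤ t) :
    2 * a * ε ^ (η - 1) * t ≤ (4 : ℝ) ^ (2 / η) * a ^ (2 / η) * t ^ 2 / η ^ (2 / η) := by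
  have hC : 2 * a * ε ^ (η - 1) = η / ε := by
    rw [rpow_sub_one hε.ne', hεη]
    field_simp
  have hK : (4 : ℝ) ^ (2 / η) * a ^ (2 / η) / η ^ (2 / η) = 2 ^ (2 / η) / ε ^ 2 := by
    have hε2 : ε ^ 2 = (η / (2 * a)) ^ (2 / η) := by
      rw [← hεη, ← rpow_mul hε.le, mul_div_cancel₀ _ hη₁.ne', rpow_two]
    rw [hε2, ← mul_rpow (by norm_num) ha.le, ← div_rpow (by positivity) hη₁.le,
      ← div_rpow (by norm_num) (by positivity)]
    congr 1
    field_simp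
    ring
  have hq : 1 ≤ t / ε := (one_le_div hε).2 ht
  have h2 : 1 ≤ (2 : ℝ) ^ (2 / η) := one_le_rpow (by norm_num) (by positivity)
  calc 2 * a * ε ^ (η - 1) * t = η * (t / ε) := by rw [hC]; ring
    _ ≤ 1 * (t / ε) * (t / ε) := by gcongr; linarith
    _ ≤ 2 ^ (2 / η) * (t / ε) ^ 2 := by rw [sq, ← mul_assoc]; gcongr
    _ = (4 : ℝ) ^ (2 / η) * a ^ (2 / η) * t ^ 2 / η ^ (2 / η) := by
      rw [mul_div_right_comm, hK]
      field_simp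

theorem singular_gronwall_monotone_general (T a η : ℝ) (ha : 0 < a)
    (hη₁ : 0 < η) (hη₂ : η < 1)
    (ω v : ℝ → ℝ)
    (hω_mono : MonotoneOn ω (Set.Icc 0 T))
    (hω_nonneg : ∀ t ∈ Set.Icc (0 : ℝ) T, 0 ≤ ω t)
    (hv_meas : Measurable v)
    (hv_bdd : ∃ M : ℝ, ∀ t ∈ Set.Icc (0 : ℝ) T, v t ≤ M)
    (hv_nonneg : ∀ t ∈ Set.Icc (0 : ℝ) T, 0 ≤ v t)
    (hineq : ∀ t ∈ Set.Icc (0 : ℝ) T,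
      v t ≤ ω t + a * ∫ s in (0 : ℝ)..t, (t - s) ^ (η - 1) * v s) :
    ∀ t ∈ Set.Icc (0 : ℝ) T,
      v t ≤ 2 * ω t
        * Real.exp ((4 : ℝ) ^ (2 / η) * a ^ (2 / η) * t ^ 2 / η ^ (2 / η)) := by
  intro t ht
  obtain ⟨M, hM⟩ := hv_bdd
  have hv_bdd : BddAbove (v '' Icc 0 T) := ⟨M, forall_mem_image.2 hM⟩
  set ε := (η / (2 * a)) ^ (1 / η) with hε_def
  have hε : 0 < ε := by positivity
  have hεη : ε ^ η = η / (2 * a) := by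
    rw [hε_def, ← rpow_mul (by positivity), one_div_mul_cancel hη₁.ne', rpow_one]
  have hεη' : a * (ε ^ η / η) = 1 / 2 := by
    rw [hεη]
    field_simp
  have hωt := hω_nonneg t ht
  refine (le_runningSup hv_bdd ht.2 ⟨ht.1, le_rfl⟩).trans ?_
  rcases le_or_gt t ε with htε | hεt
  · exact (runningSup_le_two_mul ha.le hη₁ hεη' hω_mono hv_bdd hv_nonneg hineq ht htε).trans
      (le_mul_of_one_le_right (by positivity) (one_le_exp (by positivity)))
  · refine (runningSup_le_two_mul_mul_exp ha.le hη₁ hη₂.le hε hεη' hω_mono hω_nonneg hv_meas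
      hv_bdd hv_nonneg hineq ht).trans ?_
    gcongr
    exact two_mul_mul_rpow_mul_le ha hη₁ hη₂.le hε hεη hεt.le

/-- Gronwall-type lemma for the singular kernel `(t−s)^(η−1)` with non-decreasing `ω`: if
`v(t) ≤ ω(t) + a ∫₀ᵗ (t−s)^(η−1) v(s) ds` on `[0,T]`, then
`v(t) ≤ 2 ω(t) exp(4^(2/η) a^(2/η) t² / η^(2/η))`. -/
theorem singular_gronwall_monotone (T a η : ℝ) (hT : 0 < T) (ha : 0 < a)
    (hη₁ : 0 < η) (hη₂ : η < 1)
    (ω v : ℝ → ℝ)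
    (hω_cont : ContinuousOn ω (Set.Icc 0 T))
    (hω_mono : MonotoneOn ω (Set.Icc 0 T))
    (hω_nonneg : ∀ t ∈ Set.Icc (0 : ℝ) T, 0 ≤ ω t)
    (hv_meas : Measurable v)
    (hv_bdd : ∃ M : ℝ, ∀ t ∈ Set.Icc (0 : ℝ) T, v t ≤ M)
    (hv_nonneg : ∀ t ∈ Set.Icc (0 : ℝ) T, 0 ≤ v t)
    (hineq : ∀ t ∈ Set.Icc (0 : ℝ) T,
      v t ≤ ω t + a * ∫ s in (0 : ℝ)..t, (t - s) ^ (η - 1) * v s) :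
    ∀ t ∈ Set.Icc (0 : ℝ) T,
      v t ≤ 2 * ω t
        * Real.exp ((4 : ℝ) ^ (2 / η) * a ^ (2 / η) * t ^ 2 / η ^ (2 / η)) :=
  singular_gronwall_monotone_general T a η ha hη₁ hη₂ ω v hω_mono hω_nonneg hv_meas hv_bdd hv_nonneg
    hineq
end
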